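/- arXiv:0704.2384 — 10 statements merged into one kernel-verified Lean document; each statement's English description precedes it below -/
import Mathlib

section
/- Let (R,B) be a ℤ-based rng. Then the ℂ-algebra R_ℂ := ℂ ⊗_ℤ R is a semisimple ring. -/
/-!
The functional `τ(x) = ⟨e, x⟩` and the antilinear, multiplicative involution `~` satisfy
`τ(~x * y) = ⟨x, y⟩` for the standard Hermitian form in the basis coordinates. Hence
`x ↦ τ(~x * x)` is anisotropic, which forces `R_ℂ` to be reduced: if `x² = 0` then `d = ~x * x`
is `~`-fixed with `d² = 0`, so `τ(~d * d) = 0` gives `d = 0`, and then `τ(~x * x) = τ(d) = 0`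
gives `x = 0`. Being finite-dimensional, `R_ℂ` is Artinian, and a reduced commutative Artinian
ring is semisimple.
-/

open Matrix ComplexConjugate
open scoped ComplexOrder

theorem IsReduced.of_mul_involution_of_anisotropic {A M : Type*} [CommRing A] [Zero M]
    (s : A → A) (τ : A → M) (hs : Function.Involutive s) (hs_mul : ∀ x y, s (x * y) = s x * s y)
    (hτ0 : τ 0 = 0) (hτ : ∀ x, τ (s x * x) = 0 → x = 0) : IsReduced A := by
  refine (isReduced_iff_pow_one_lt 2 one_lt_two).2 fun x hx => ?_
  set d := s x * x with hd
  have hd_sq : d * d = 0 := by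
    rw [show d * d = s x ^ 2 * x ^ 2 by rw [hd]; ring, hx, mul_zero]
  have hsd : s d = d := by rw [hd, hs_mul, hs, mul_comm]
  have hd0 : d = 0 := hτ d (by rw [hsd, hd_sq, hτ0])
  exact hτ x (by rw [← hd, hd0, hτ0])

namespace Module.Basis

variable {ι A : Type*} [Fintype ι]

theorem repr_mul_of_mul_basis {K : Type*} [CommSemiring K] [Semiring A] [Algebra K A]
    (b : Basis ι K A) {c : ι → ι → ι → K} (hmul : ∀ i j, b i * b j = ∑ m, c i j m • b m)
    (x y : A) (m : ι) :
    b.repr (x * y) m = ∑ i, ∑ j, b.repr x i * b.repr y j * c i j m := by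
  classical
  conv_lhs => rw [← b.sum_repr x, ← b.sum_repr y, Finset.sum_mul_sum]
  simp only [smul_mul_smul_comm, hmul, Finset.smul_sum, smul_smul, map_sum, map_smul,
    repr_self, Finsupp.coe_finsetSum, Finset.sum_apply, Finsupp.smul_apply,
    Finsupp.single_apply, smul_eq_mul, mul_ite, mul_one, mul_zero, Finset.sum_ite_eq',
    Finset.mem_univ, if_true]

variable [CommRing A] [Algebra ℂ A] (b : Basis ι ℂ A)

/-- The antilinear extension of `b i ↦ b (σ i)`. -/
noncomputable def twistedStar (σ : ι → ι) (x : A) : A :=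
  b.equivFun.symm (star (b.repr x ∘ σ))

theorem repr_twistedStar (σ : ι → ι) (x : A) (j : ι) :
    b.repr (b.twistedStar σ x) j = conj (b.repr x (σ j)) := by
  rw [← b.equivFun_apply, twistedStar, LinearEquiv.apply_symm_apply]
  rfl

theorem twistedStar_involutive {σ : ι → ι} (hσ : Function.Involutive σ) :
    Function.Involutive (b.twistedStar σ) := fun x =>
  b.ext_elem fun j => by simp only [repr_twistedStar, hσ j, Complex.conj_conj]

theorem twistedStar_mul {N : ι → ι → ι → ℤ} (hmul : ∀ i j, b i * b j = ∑ m, (N i j m : ℂ) • b m)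
    {σ : ι → ι} (hσ : Function.Involutive σ) (hσN : ∀ i j m, N (σ i) (σ j) m = N i j (σ m))
    (x y : A) : b.twistedStar σ (x * y) = b.twistedStar σ x * b.twistedStar σ y := by
  refine b.ext_elem fun m => ?_
  simp only [repr_twistedStar, b.repr_mul_of_mul_basis hmul, map_sum, map_mul, map_intCast]
  rw [← Equiv.sum_comp hσ.toPerm]
  refine Finset.sum_congr rfl fun i _ => ?_
  rw [← Equiv.sum_comp hσ.toPerm]
  refine Finset.sum_congr rfl fun j _ => ?_
  simp only [Function.Involutive.coe_toPerm, hσ _, hσN]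

/-- `star (b.repr 1) ⬝ᵥ b.repr x` is the trace functional `τ x`. -/
theorem dotProduct_one_twistedStar_mul [DecidableEq ι] {N : ι → ι → ι → ℤ}
    (hmul : ∀ i j, b i * b j = ∑ m, (N i j m : ℂ) • b m)
    {σ : ι → ι} (hσ : Function.Involutive σ)
    (hτ : ∀ i j, (∑ m, conj (b.repr 1 m) * (N (σ i) j m : ℂ)) = if i = j then (1 : ℂ) else 0)
    (x y : A) :
    star ⇑(b.repr 1) ⬝ᵥ ⇑(b.repr (b.twistedStar σ x * y)) = star ⇑(b.repr x) ⬝ᵥ ⇑(b.repr y) := by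
  simp only [dotProduct, Pi.star_apply, RCLike.star_def, b.repr_mul_of_mul_basis hmul,
    repr_twistedStar]
  calc ∑ m, conj (b.repr 1 m) * ∑ i, ∑ j, conj (b.repr x (σ i)) * b.repr y j * (N i j m : ℂ)
      = ∑ i, ∑ j, conj (b.repr x (σ i)) * b.repr y j *
          ∑ m, conj (b.repr 1 m) * (N i j m : ℂ) := by
        simp only [Finset.mul_sum]
        rw [Finset.sum_comm]
        refine Finset.sum_congr rfl fun i _ => ?_
        rw [Finset.sum_comm]
        refine Finset.sum_congr rfl fun j _ => Finset.sum_congr rfl fun m _ => ?_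
        ring
    _ = ∑ i, ∑ j, conj (b.repr x i) * b.repr y j * if i = j then 1 else 0 := by
        rw [← Equiv.sum_comp hσ.toPerm]
        simp only [Function.Involutive.coe_toPerm, hσ _, hτ]
    _ = ∑ i, conj (b.repr x i) * b.repr y i := by
        simp only [mul_ite, mul_one, mul_zero, Finset.sum_ite_eq, Finset.mem_univ, if_true]

end Module.Basis

theorem zBasedRng_complexification_isSemisimpleRing_general
    {n : ℕ} (A : Type*) [CommRing A] [Algebra ℂ A]
    (b : Module.Basis (Fin n) ℂ A) (N : Fin n → Fin n → Fin n → ℤ) (σ : Fin n → Fin n)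
    (hmul : ∀ i j, b i * b j = ∑ m, (N i j m : ℂ) • b m)
    (hσ : ∀ i, σ (σ i) = i)
    (hσN : ∀ i j m, N (σ i) (σ j) m = N i j (σ m))
    (hτ : ∀ i j, (∑ m, (starRingEnd ℂ) (b.repr 1 m) * (N (σ i) j m : ℂ)) =
      if i = j then (1 : ℂ) else 0) :
    IsSemisimpleRing A := by
  have : Module.Finite ℂ A := .of_basis b
  have : IsArtinianRing A := .of_finite ℂ A
  have : IsReduced A := by
    refine .of_mul_involution_of_anisotropic (b.twistedStar σ)
      (fun x => star ⇑(b.repr 1) ⬝ᵥ ⇑(b.repr x)) (b.twistedStar_involutive hσ) (b.twistedStar_mul hmul hσ hσN) (by simp) fun x hx => ?_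
    rw [b.dotProduct_one_twistedStar_mul hmul hσ hτ, dotProduct_star_self_eq_zero] at hx
    exact b.repr.map_eq_zero_iff.mp (Finsupp.coe_eq_zero.mp hx)
  exact IsArtinianRing.isSemisimpleRing_of_isReduced A

/-- Let `(R,B)` be a `ℤ`-based rng. Then `R_ℂ = ℂ ⊗_ℤ R` is a
semisimple ring. Here the complexification `R_ℂ` is modelled as a commutative
`ℂ`-algebra `A` with a basis `b` indexed by `Fin n` whose structure constants
are the integers `N i j m`; `1 = e = ∑ e_i • b i` with `e_i = b.repr 1 i`,
`σ` is the involution `~` on the basis, and the hypotheses are exactly the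
axioms of a `ℤ`-based rng. -/
theorem zBasedRng_complexification_isSemisimpleRing
    {n : ℕ} (A : Type*) [CommRing A] [Algebra ℂ A]
    (b : Module.Basis (Fin n) ℂ A) (N : Fin n → Fin n → Fin n → ℤ) (σ : Fin n → Fin n)
    (hmul : ∀ i j, b i * b j = ∑ m, (N i j m : ℂ) • b m)
    (hσ : ∀ i, σ (σ i) = i)
    (hσN : ∀ i j m, N (σ i) (σ j) m = N i j (σ m))
    (hτ : ∀ i j, (∑ m, (starRingEnd ℂ) (b.repr 1 m) * (N (σ i) j m : ℂ)) =
      if i = j then (1 : ℂ) else 0)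
    (he : ∀ j, (starRingEnd ℂ) (b.repr 1 (σ j)) = b.repr 1 j) :
    IsSemisimpleRing A :=
  zBasedRng_complexification_isSemisimpleRing_general A b N σ hmul hσ hσN hτ
end

section
/- Let (R,B) be a ℤ-based rng, let E₁ and E₂ be modules over R_ℂ := ℂ ⊗_ℤ R, and let h : E₁ → E₂ be a ℂ-linear map. Then the map h₀ : E₁ → E₂ defined by h₀(w) = Σ_{i=0}^{n−1} b_i · h(~b_i · w) is a homomorphism of R_ℂ-modules. -/
/-!
Let `τ` be the functional `b_i ↦ conj e_i`. The axioms say that `(b_i)` and `(~b_i)` are dual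
bases for the pairing `(x, y) ↦ τ (x y)`, so the coordinates of `x` in either basis are read off
by pairing with the other one. Expanding `a ~b_i` and `a b_k` this way, both `h₀ (a • w)` and
`a • h₀ w` become `∑_{i,k} τ (a b_i ~b_k) • b_i • h (~b_k • w)`, the two coefficients agreeing
because `R_ℂ` is commutative.
-/

namespace Module.Basis

variable {ι K A : Type*} [DecidableEq ι] [CommSemiring K] [CommSemiring A]
  [Algebra K A]

theorem repr_apply_eq_of_pairing (b : Basis ι K A) {c : ι → A} {τ : A →ₗ[K] K}
    (hτ : ∀ i j, τ (c i * b j) = if i = j then 1 else 0) (x : A) (i : ι) :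
    b.repr x i = τ (c i * x) := by
  have hcoord : b.coord i = τ ∘ₗ LinearMap.mulLeft K (c i) :=
    b.ext fun j => by simp [hτ, Finsupp.single_apply, eq_comm]
  exact LinearMap.congr_fun hcoord x

variable [Fintype ι]

theorem sum_pairing_smul_eq (b : Basis ι K A) {c : ι → A} {τ : A →ₗ[K] K}
    (hτ : ∀ i j, τ (c i * b j) = if i = j then 1 else 0) (x : A) :
    ∑ i, τ (c i * x) • b i = x := by
  simpa only [b.repr_apply_eq_of_pairing hτ] using b.sum_repr x

variable {E₁ E₂ : Type*} [AddCommMonoid E₁] [AddCommMonoid E₂] [Module K E₁] [Module K E₂]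
  [Module A E₁] [Module A E₂] [IsScalarTower K A E₁] [IsScalarTower K A E₂]

noncomputable def averagedMap (b c : Basis ι K A) {τ : A →ₗ[K] K}
    (hτ : ∀ i j, τ (c i * b j) = if i = j then 1 else 0) (h : E₁ →ₗ[K] E₂) :
    E₁ →ₗ[A] E₂ where
  toFun w := ∑ i, b i • h (c i • w)
  map_add' v w := by simp only [smul_add, map_add, Finset.sum_add_distrib]
  map_smul' a w := by
    have hc : ∀ i j, τ (b i * c j) = if i = j then 1 else 0 := fun i j => by
      rw [mul_comm, hτ]
      exact if_congr eq_comm rfl rfl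
    have expand_c : ∀ i, c i • a • w = ∑ k, τ (b k * (a * c i)) • c k • w := fun i => by
      rw [smul_smul, mul_comm]
      conv_lhs => rw [← c.sum_pairing_smul_eq hc (a * c i)]
      simp only [Finset.sum_smul, smul_assoc]
    have expand_b : ∀ k, a • b k • h (c k • w) =
        ∑ i, τ (c i * (a * b k)) • b i • h (c k • w) := fun k => by
      rw [smul_smul]
      conv_lhs => rw [← b.sum_pairing_smul_eq hτ (a * b k)]
      simp only [Finset.sum_smul, smul_assoc]
    simp only [RingHom.id_apply, Finset.smul_sum, expand_c, expand_b, map_sum, map_smul,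
      smul_comm (b _) (τ _)]
    rw [Finset.sum_comm]
    exact Finset.sum_congr rfl fun k _ => Finset.sum_congr rfl fun i _ => by
      congr 2
      ring

theorem averagedMap_apply (b c : Basis ι K A) {τ : A →ₗ[K] K}
    (hτ : ∀ i j, τ (c i * b j) = if i = j then 1 else 0) (h : E₁ →ₗ[K] E₂) (w : E₁) :
    averagedMap b c hτ h w = ∑ i, b i • h (c i • w) :=
  rfl

end Module.Basis

theorem zBasedRng_averaged_map_is_module_hom_general
    {n : ℕ} (A : Type*) [CommRing A] [Algebra ℂ A]
    (b : Module.Basis (Fin n) ℂ A) (N : Fin n → Fin n → Fin n → ℤ) (σ : Fin n → Fin n)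
    (hmul : ∀ i j, b i * b j = ∑ m, (N i j m : ℂ) • b m)
    (hσ : ∀ i, σ (σ i) = i)
    (hτ : ∀ i j, (∑ m, (starRingEnd ℂ) (b.repr 1 m) * (N (σ i) j m : ℂ)) =
      if i = j then (1 : ℂ) else 0)
    (E₁ E₂ : Type*) [AddCommGroup E₁] [AddCommGroup E₂]
    [Module ℂ E₁] [Module ℂ E₂] [Module A E₁] [Module A E₂]
    [IsScalarTower ℂ A E₁] [IsScalarTower ℂ A E₂]
    (h : E₁ →ₗ[ℂ] E₂) :
    ∃ h₀ : E₁ →ₗ[A] E₂, ∀ w : E₁, h₀ w = ∑ i, b i • h (b (σ i) • w) := by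
  let τ : A →ₗ[ℂ] ℂ := b.constr ℂ fun m => starRingEnd ℂ (b.repr 1 m)
  let c := b.reindex (Function.Involutive.toPerm σ hσ)
  have hc : ∀ i, c i = b (σ i) := b.reindex_apply _
  have hpair : ∀ i j, τ (c i * b j) = if i = j then 1 else 0 := fun i j => by
    rw [hc, hmul, ← hτ, map_sum]
    exact Finset.sum_congr rfl fun m _ => by
      rw [map_smul, b.constr_basis, smul_eq_mul, mul_comm]
  exact ⟨b.averagedMap c hpair h, fun w => by simp only [b.averagedMap_apply, hc]⟩

/-- Let `(R,B)` be a `ℤ`-based rng, `E₁, E₂` modules over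
`R_ℂ` and `h : E₁ → E₂` a `ℂ`-linear map.  Then
`h₀ : w ↦ ∑ i, b i • h (~b i • w)` is a homomorphism of `R_ℂ`-modules. -/
theorem zBasedRng_averaged_map_is_module_hom
    {n : ℕ} (A : Type*) [CommRing A] [Algebra ℂ A]
    (b : Module.Basis (Fin n) ℂ A) (N : Fin n → Fin n → Fin n → ℤ) (σ : Fin n → Fin n)
    (hmul : ∀ i j, b i * b j = ∑ m, (N i j m : ℂ) • b m)
    (hσ : ∀ i, σ (σ i) = i)
    (hσN : ∀ i j m, N (σ i) (σ j) m = N i j (σ m))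
    (hτ : ∀ i j, (∑ m, (starRingEnd ℂ) (b.repr 1 m) * (N (σ i) j m : ℂ)) =
      if i = j then (1 : ℂ) else 0)
    (he : ∀ j, (starRingEnd ℂ) (b.repr 1 (σ j)) = b.repr 1 j)
    (E₁ E₂ : Type*) [AddCommGroup E₁] [AddCommGroup E₂]
    [Module ℂ E₁] [Module ℂ E₂] [Module A E₁] [Module A E₂]
    [IsScalarTower ℂ A E₁] [IsScalarTower ℂ A E₂]
    (h : E₁ →ₗ[ℂ] E₂) :
    ∃ h₀ : E₁ →ₗ[A] E₂, ∀ w : E₁, h₀ w = ∑ i, b i • h (b (σ i) • w) :=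
  zBasedRng_averaged_map_is_module_hom_general A b N σ hmul hσ hτ E₁ E₂ h
end

section
/- Let (R,B) be a ℤ-based rng. If χ₁, χ₂ : R_ℂ → ℂ are two characters with χ₁ ≠ χ₂, then Σ_{b∈B} χ₁(b)·χ₂(~b) = 0; moreover for every character χ one has Σ_{b∈B} χ(b)·χ(~b) ≠ 0. In other words, the rows of any s-matrix of (R,B) are pairwise orthogonal. -/
open scoped ComplexConjugate ComplexOrder Matrix

/-! The element `P_χ = ∑ χ(b) ~b`, the image under `χ ⊗ id` of the Casimir element of the dual
bases `B`, `~B` of the Frobenius form `τ(xy)`, satisfies `P_χ a = χ(a) P_χ`. Applying `χ₂` gives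
`(χ₁(a) - χ₂(a)) χ₂(P_χ₁) = 0`, whence the first relation. If `χ(P_χ) = 0` then `P_χ² = 0`; but
`R_ℂ` is reduced, since the antilinear extension of `~` is a multiplicative involution for which
`τ(~x · x)` is the squared norm of the coordinates of `x`. So `P_χ = 0`, contradicting `χ(1) = 1`. -/

section DualBases

variable {K A ι : Type*} [Field K] [CommRing A] [Algebra K A] [Fintype ι]

theorem Module.Basis.repr_apply_eq_of_dual [DecidableEq ι] (b : Module.Basis ι K A) (c : ι → A)
    (τ : A →ₗ[K] K) (hdual : ∀ i j, τ (c i * b j) = if i = j then 1 else 0) (x : A) (j : ι) :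
    b.repr x j = τ (c j * x) := by
  conv_rhs => rw [← b.sum_repr x]
  simp only [Finset.mul_sum, mul_smul_comm, map_sum, map_smul, hdual, smul_eq_mul, mul_ite,
    mul_one, mul_zero, Finset.sum_ite_eq, Finset.mem_univ, if_true]

variable (b c : Module.Basis ι K A)

/-- The image of the Casimir element `∑ i, b i ⊗ c i` under `χ ⊗ id`. -/
noncomputable def characterCasimir (χ : A →ₐ[K] K) : A := ∑ i, χ (b i) • c i

theorem characterCasimir_ne_zero (χ : A →ₐ[K] K) : characterCasimir b c χ ≠ 0 := by
  intro h
  have hχb : ∀ i, χ (b i) = 0 := fun i => by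
    simpa only [characterCasimir, c.repr_sum_self, map_zero, Finsupp.zero_apply]
      using congrArg (fun y => c.repr y i) h
  have hχ1 : χ 1 = 0 := by
    rw [← b.sum_repr 1, map_sum]
    simp only [map_smul, hχb, smul_zero, Finset.sum_const_zero]
  exact one_ne_zero (χ.map_one ▸ hχ1)

variable [DecidableEq ι] (τ : A →ₗ[K] K)

theorem characterCasimir_mul (hdual : ∀ i j, τ (c i * b j) = if i = j then 1 else 0)
    (χ : A →ₐ[K] K) (a : A) :
    characterCasimir b c χ * a = χ a • characterCasimir b c χ := by
  have hdual' : ∀ i j, τ (b i * c j) = if i = j then 1 else 0 := fun i j => by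
    rw [mul_comm, hdual]; exact if_congr eq_comm rfl rfl
  have hχ : ∀ k, χ (a * b k) = ∑ i, τ (c i * (a * b k)) * χ (b i) := fun k => by
    conv_lhs => rw [← b.sum_repr (a * b k)]
    simp only [map_sum, map_smul, smul_eq_mul, b.repr_apply_eq_of_dual c τ hdual]
  have hc : ∀ i, c i * a = ∑ k, τ (b k * (c i * a)) • c k := fun i => by
    conv_lhs => rw [← c.sum_repr (c i * a)]
    simp only [c.repr_apply_eq_of_dual b τ hdual']
  calc characterCasimir b c χ * a
      = ∑ i, ∑ k, (χ (b i) * τ (b k * (c i * a))) • c k := by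
        simp only [characterCasimir, Finset.sum_mul, smul_mul_assoc]
        refine Finset.sum_congr rfl fun i _ => ?_
        conv_lhs => rw [hc, Finset.smul_sum]
        simp only [smul_smul]
    _ = ∑ k, (χ a * χ (b k)) • c k := by
        rw [Finset.sum_comm]
        refine Finset.sum_congr rfl fun k _ => ?_
        rw [← map_mul, hχ, Finset.sum_smul]
        refine Finset.sum_congr rfl fun i _ => ?_
        ring_nf
    _ = χ a • characterCasimir b c χ := by
        simp only [characterCasimir, Finset.smul_sum, smul_smul]

theorem characterCasimir_apply_eq_zero (hdual : ∀ i j, τ (c i * b j) = if i = j then 1 else 0)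
    {χ₁ χ₂ : A →ₐ[K] K} (hne : χ₁ ≠ χ₂) :
    χ₂ (characterCasimir b c χ₁) = 0 := by
  obtain ⟨a, ha⟩ := DFunLike.ne_iff.mp hne
  have h := congrArg χ₂ (characterCasimir_mul b c τ hdual χ₁ a)
  rw [map_mul, map_smul, smul_eq_mul] at h
  have h' : (χ₁ a - χ₂ a) * χ₂ (characterCasimir b c χ₁) = 0 := by linear_combination -h
  exact (mul_eq_zero.mp h').resolve_left (sub_ne_zero.mpr ha)

end DualBases

section Positivity

variable {A ι : Type*} [CommRing A] [Algebra ℂ A] [Fintype ι] [DecidableEq ι]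
  (b : Module.Basis ι ℂ A) (τ : A →ₗ[ℂ] ℂ) (S : A →ₗ⋆[ℂ] A)

theorem tau_star_mul (hτS : ∀ i j, τ (S (b i) * b j) = if i = j then 1 else 0) (x y : A) :
    τ (S x * y) = star (b.equivFun x) ⬝ᵥ b.equivFun y := by
  have hrepr : ∀ j, τ (S (b j) * y) = b.repr y j := fun j =>
    (b.repr_apply_eq_of_dual (fun i => S (b i)) τ hτS y j).symm
  conv_lhs => rw [← b.sum_repr x]
  simp only [map_sum, map_smulₛₗ, Finset.sum_mul, smul_mul_assoc, smul_eq_mul, hrepr,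
    RingHom.id_apply, dotProduct, Pi.star_apply, Module.Basis.equivFun_apply, RCLike.star_def]

theorem eq_zero_of_tau_star_mul_self_eq_zero
    (hτS : ∀ i j, τ (S (b i) * b j) = if i = j then 1 else 0) {x : A} (hx : τ (S x * x) = 0) :
    x = 0 := by
  rw [tau_star_mul b τ S hτS, dotProduct_star_self_eq_zero] at hx
  exact b.equivFun.map_eq_zero_iff.mp hx

theorem isReduced_of_orthonormal_star (hτS : ∀ i j, τ (S (b i) * b j) = if i = j then 1 else 0)
    (hS_mul : ∀ x y, S (x * y) = S x * S y) (hS_invol : ∀ x, S (S x) = x) : IsReduced A := by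
  refine (isReduced_iff_pow_one_lt 2 one_lt_two).mpr fun x hx => ?_
  rw [sq] at hx
  set q := S x * x with hq_def
  have hSq : S q = q := by rw [hS_mul, hS_invol, mul_comm]
  have hqq : q * q = 0 := by
    calc q * q = S (x * x) * (x * x) := by rw [hS_mul]; ring
      _ = 0 := by rw [hx, mul_zero]
  have hq : q = 0 :=
    eq_zero_of_tau_star_mul_self_eq_zero b τ S hτS (by rw [hSq, hqq, map_zero])
  exact eq_zero_of_tau_star_mul_self_eq_zero b τ S hτS (by rw [← hq_def, hq, map_zero])

theorem character_apply_characterCasimir_ne_zero (c : Module.Basis ι ℂ A)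
    (hdual : ∀ i j, τ (c i * b j) = if i = j then 1 else 0) (hSc : ∀ i, S (b i) = c i)
    (hS_mul : ∀ x y, S (x * y) = S x * S y) (hS_invol : ∀ x, S (S x) = x) (χ : A →ₐ[ℂ] ℂ) :
    χ (characterCasimir b c χ) ≠ 0 := by
  intro h
  have hτS : ∀ i j, τ (S (b i) * b j) = if i = j then 1 else 0 := by simpa only [hSc] using hdual
  have := isReduced_of_orthonormal_star b τ S hτS hS_mul hS_invol
  refine characterCasimir_ne_zero b c χ (IsNilpotent.eq_zero ⟨2, ?_⟩)
  rw [sq, characterCasimir_mul b c τ hdual, h, zero_smul]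

end Positivity

section BasisConj

variable {A ι : Type*} [CommRing A] [Algebra ℂ A] [Fintype ι] (b : Module.Basis ι ℂ A)
  (σ : ι → ι)

noncomputable def basisConj : A →ₗ⋆[ℂ] A where
  toFun x := ∑ i, conj (b.repr x i) • b (σ i)
  map_add' x y := by
    simp only [map_add, Finsupp.add_apply, add_smul, Finset.sum_add_distrib]
  map_smul' z x := by
    simp only [map_smul, Finsupp.smul_apply, smul_eq_mul, map_mul, mul_smul, Finset.smul_sum]

variable {b σ}

theorem basisConj_apply_basis [DecidableEq ι] (i : ι) : basisConj b σ (b i) = b (σ i) := by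
  simp [basisConj, Finsupp.single_apply]

theorem basisConj_basisConj (hσ : Function.Involutive σ) (x : A) :
    basisConj b σ (basisConj b σ x) = x := by
  classical
  conv_rhs => rw [← b.sum_repr x]
  conv_lhs => rw [← b.sum_repr x]
  simp only [map_sum, map_smulₛₗ, basisConj_apply_basis, hσ _, RingHomCompTriple.comp_apply,
    RingHom.id_apply]

theorem basisConj_mul {N : ι → ι → ι → ℤ} (hmul : ∀ i j, b i * b j = ∑ m, (N i j m : ℂ) • b m)
    (hσ : Function.Involutive σ) (hσN : ∀ i j m, N (σ i) (σ j) m = N i j (σ m)) (x y : A) :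
    basisConj b σ (x * y) = basisConj b σ x * basisConj b σ y := by
  classical
  have hbasis : ∀ i j, basisConj b σ (b i * b j) = basisConj b σ (b i) * basisConj b σ (b j) := by
    intro i j
    rw [basisConj_apply_basis, basisConj_apply_basis, hmul, hmul, map_sum]
    simp only [map_smulₛₗ, map_intCast, basisConj_apply_basis, hσN]
    rw [← Equiv.sum_comp (hσ.toPerm σ) fun m => (N i j m : ℂ) • b (σ m)]
    simp only [Function.Involutive.coe_toPerm, hσ _]
  conv_lhs => rw [← b.sum_repr x, ← b.sum_repr y]
  conv_rhs => rw [← b.sum_repr x, ← b.sum_repr y]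
  simp only [Finset.sum_mul, Finset.mul_sum, smul_mul_smul_comm, map_sum, map_smulₛₗ, hbasis,
    map_mul]

end BasisConj

theorem zBasedRng_character_orthogonality_general
    {n : ℕ} (A : Type*) [CommRing A] [Algebra ℂ A]
    (b : Module.Basis (Fin n) ℂ A) (N : Fin n → Fin n → Fin n → ℤ) (σ : Fin n → Fin n)
    (hmul : ∀ i j, b i * b j = ∑ m, (N i j m : ℂ) • b m)
    (hσ : ∀ i, σ (σ i) = i)
    (hσN : ∀ i j m, N (σ i) (σ j) m = N i j (σ m))
    (hτ : ∀ i j, (∑ m, (starRingEnd ℂ) (b.repr 1 m) * (N (σ i) j m : ℂ)) =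
      if i = j then (1 : ℂ) else 0) :
    (∀ χ₁ χ₂ : A →ₐ[ℂ] ℂ, χ₁ ≠ χ₂ → (∑ i, χ₁ (b i) * χ₂ (b (σ i))) = 0) ∧
    (∀ χ : A →ₐ[ℂ] ℂ, (∑ i, χ (b i) * χ (b (σ i))) ≠ 0) := by
  have hσ : Function.Involutive σ := hσ
  let c := b.reindex (hσ.toPerm σ)
  have hc : ∀ i, c i = b (σ i) := fun i => by
    simp [c, Module.Basis.reindex_apply, Function.Involutive.toPerm_symm]
  let τ : A →ₗ[ℂ] ℂ := b.constr ℂ fun m => conj (b.repr 1 m)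
  have hdual : ∀ i j, τ (c i * b j) = if i = j then 1 else 0 := fun i j => by
    rw [hc, hmul, map_sum, ← hτ]
    simp only [map_smul, τ, Module.Basis.constr_basis, smul_eq_mul, mul_comm]
  have hχ : ∀ χ₁ χ₂ : A →ₐ[ℂ] ℂ,
      χ₂ (characterCasimir b c χ₁) = ∑ i, χ₁ (b i) * χ₂ (b (σ i)) := fun χ₁ χ₂ => by
    simp only [characterCasimir, map_sum, map_smul, smul_eq_mul, hc]
  refine ⟨fun χ₁ χ₂ hne => ?_, fun χ => ?_⟩
  · rw [← hχ]
    exact characterCasimir_apply_eq_zero b c τ hdual hne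
  · rw [← hχ]
    exact character_apply_characterCasimir_ne_zero b τ (basisConj b σ) c hdual
      (fun i => (basisConj_apply_basis i).trans (hc i).symm) (basisConj_mul hmul hσ hσN)
      (basisConj_basisConj hσ) χ

/-- Orthogonality relations: if `χ₁ ≠ χ₂` are characters of
`R_ℂ` then `∑_{b ∈ B} χ₁(b) χ₂(~b) = 0`, and for every character `χ` one has
`∑_{b ∈ B} χ(b) χ(~b) ≠ 0`; i.e. the rows of any s-matrix are pairwise
orthogonal. -/
theorem zBasedRng_character_orthogonality
    {n : ℕ} (A : Type*) [CommRing A] [Algebra ℂ A]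
    (b : Module.Basis (Fin n) ℂ A) (N : Fin n → Fin n → Fin n → ℤ) (σ : Fin n → Fin n)
    (hmul : ∀ i j, b i * b j = ∑ m, (N i j m : ℂ) • b m)
    (hσ : ∀ i, σ (σ i) = i)
    (hσN : ∀ i j m, N (σ i) (σ j) m = N i j (σ m))
    (hτ : ∀ i j, (∑ m, (starRingEnd ℂ) (b.repr 1 m) * (N (σ i) j m : ℂ)) =
      if i = j then (1 : ℂ) else 0)
    (he : ∀ j, (starRingEnd ℂ) (b.repr 1 (σ j)) = b.repr 1 j) :
    (∀ χ₁ χ₂ : A →ₐ[ℂ] ℂ, χ₁ ≠ χ₂ → (∑ i, χ₁ (b i) * χ₂ (b (σ i))) = 0) ∧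
    (∀ χ : A →ₐ[ℂ] ℂ, (∑ i, χ (b i) * χ (b (σ i))) ≠ 0) :=
  zBasedRng_character_orthogonality_general A b N σ hmul hσ hσN hτ
end

section
/- Let (R,B) be a ℤ-based rng with s-matrix s. Then the set of columns of s is closed under complex conjugation; more precisely, for every character χ_k and every index i one has χ_k(b_{~i}) = conj(χ_k(b_i)), i.e. s_{~i} = conj(s_i) where s_i denotes the i-th column of s. -/
/-! Let `⟪x, y⟫ := τ (~x * y)`. In basis coordinates this is the standard Hermitian form
`∑ t, conj xₜ * yₜ`, and since `~` is multiplicative, multiplication by `b i` is adjoint to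
multiplication by `b (σ i)`. The pairing `τ (x * y)` is nondegenerate, so `χ = τ (· * v)` for
some `v ≠ 0`, and multiplicativity of `χ` makes `v` a common eigenvector: `x * v = χ x • v`.
Hence `χ (b (σ i)) ⟪v, v⟫ = ⟪b i * v, v⟫ = conj (χ (b i)) ⟪v, v⟫` with `⟪v, v⟫ ≠ 0`. -/

open scoped ComplexConjugate

namespace ZBasedRng

variable {ι A : Type*} [Fintype ι] [CommRing A] [Algebra ℂ A] (b : Module.Basis ι ℂ A)

/-- The functional `τ` of the paper: `τ (b m) = conj (e m)`, where `e = b.repr 1`. -/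
noncomputable def tau : A →ₗ[ℂ] ℂ := ∑ m, conj (b.repr 1 m) • b.coord m

/-- The antilinear extension `~` of the involution `σ` of the basis. -/
noncomputable def tilde (σ : ι → ι) : A →ₛₗ[starRingEnd ℂ] A where
  toFun x := ∑ t, conj (b.repr x t) • b (σ t)
  map_add' x y := by
    simp only [map_add, Finsupp.add_apply, add_smul, Finset.sum_add_distrib]
  map_smul' c x := by
    simp only [map_smul, Finsupp.smul_apply, smul_eq_mul, map_mul, mul_smul, Finset.smul_sum]

variable {b}

theorem tau_apply (x : A) : tau b x = ∑ m, conj (b.repr 1 m) * b.repr x m := by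
  simp [tau]

theorem tilde_apply (σ : ι → ι) (x : A) : tilde b σ x = ∑ t, conj (b.repr x t) • b (σ t) := rfl

theorem tilde_basis [DecidableEq ι] (σ : ι → ι) (i : ι) : tilde b σ (b i) = b (σ i) := by
  simp [tilde_apply, Finsupp.single_apply]

theorem tilde_mul {σ : ι → ι} (h : ∀ i j, tilde b σ (b i * b j) = b (σ i) * b (σ j)) (x y : A) :
    tilde b σ (x * y) = tilde b σ x * tilde b σ y := by
  conv_lhs => rw [← b.sum_repr x, ← b.sum_repr y]
  simp only [Finset.sum_mul_sum, smul_mul_smul_comm, map_sum, map_smulₛₗ, h, tilde_apply, map_mul]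

section Pairing

variable [DecidableEq ι] {σ : ι → ι} (hτ : ∀ i j, tau b (b (σ i) * b j) = if i = j then 1 else 0)
include hτ

theorem tau_basis_mul (i : ι) (y : A) : tau b (b (σ i) * y) = b.repr y i := by
  have : (tau b).comp (LinearMap.mulLeft ℂ (b (σ i))) = b.coord i :=
    b.ext fun j => by simp [hτ, Finsupp.single_apply, eq_comm]
  exact LinearMap.congr_fun this y

theorem tau_tilde_mul (x y : A) :
    tau b (tilde b σ x * y) = ∑ t, conj (b.repr x t) * b.repr y t := by
  simp only [tilde_apply, Finset.sum_mul, smul_mul_assoc, map_sum, map_smul, tau_basis_mul hτ,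
    smul_eq_mul]

theorem tau_tilde_mul_self_ne_zero {x : A} (hx : x ≠ 0) : tau b (tilde b σ x * x) ≠ 0 := by
  rw [tau_tilde_mul hτ]
  simp_rw [← Complex.normSq_eq_conj_mul_self]
  norm_cast
  intro h
  rw [Finset.sum_eq_zero_iff_of_nonneg fun t _ => Complex.normSq_nonneg _] at h
  exact hx (b.repr.injective (Finsupp.ext fun t => by simpa using h t (Finset.mem_univ t)))

theorem tau_mul_dual (hσ : Function.Involutive σ) (f : A →ₗ[ℂ] ℂ) (x : A) :
    tau b (x * ∑ s, f (b (σ s)) • b s) = f x := by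
  have : (tau b).comp (LinearMap.mulRight ℂ (∑ s, f (b (σ s)) • b s)) = f :=
    b.ext fun j => by
      change tau b (b j * _) = f (b j)
      rw [← hσ j, tau_basis_mul hτ]
      simp [Finsupp.single_apply]
  exact LinearMap.congr_fun this x

theorem exists_eigenvector (hσ : Function.Involutive σ) (χ : A →ₐ[ℂ] ℂ) :
    ∃ v ≠ 0, ∀ x, x * v = χ x • v := by
  set v := ∑ s, χ (b (σ s)) • b s
  have hv : ∀ x, tau b (x * v) = χ x := tau_mul_dual hτ hσ χ.toLinearMap
  refine ⟨v, fun h => by simpa [h] using hv 1, fun x => b.repr.injective (Finsupp.ext fun i => ?_)⟩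
  calc b.repr (x * v) i = tau b (b (σ i) * x * v) := by rw [mul_assoc, tau_basis_mul hτ]
    _ = χ x * tau b (b (σ i) * v) := by rw [hv, hv, map_mul, mul_comm]
    _ = b.repr (χ x • v) i := by
        rw [tau_basis_mul hτ, map_smul, Finsupp.smul_apply, smul_eq_mul]

end Pairing

section StructureConstants

variable {N : ι → ι → ι → ℤ} (hmul : ∀ i j, b i * b j = ∑ m, (N i j m : ℂ) • b m)
include hmul

theorem repr_basis_mul_basis [DecidableEq ι] (i j m : ι) : b.repr (b i * b j) m = N i j m := by
  simp [hmul, Finsupp.single_apply]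

theorem tilde_basis_mul_basis [DecidableEq ι] {σ : ι → ι} (hσ : Function.Involutive σ)
    (hσN : ∀ i j m, N (σ i) (σ j) m = N i j (σ m)) (i j : ι) :
    tilde b σ (b i * b j) = b (σ i) * b (σ j) := by
  rw [hmul, hmul, map_sum, ← Equiv.sum_comp (hσ.toPerm σ)]
  simp [tilde_basis, hσN, hσ _]

end StructureConstants

end ZBasedRng

open ZBasedRng

theorem zBasedRng_sMatrix_columns_conj_general
    {n : ℕ} (A : Type*) [CommRing A] [Algebra ℂ A]
    (b : Module.Basis (Fin n) ℂ A) (N : Fin n → Fin n → Fin n → ℤ) (σ : Fin n → Fin n)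
    (hmul : ∀ i j, b i * b j = ∑ m, (N i j m : ℂ) • b m)
    (hσ : ∀ i, σ (σ i) = i)
    (hσN : ∀ i j m, N (σ i) (σ j) m = N i j (σ m))
    (hτ : ∀ i j, (∑ m, (starRingEnd ℂ) (b.repr 1 m) * (N (σ i) j m : ℂ)) =
      if i = j then (1 : ℂ) else 0) :
    ∀ (χ : A →ₐ[ℂ] ℂ) (i : Fin n), χ (b (σ i)) = (starRingEnd ℂ) (χ (b i)) := by
  intro χ i
  have hτ' : ∀ i j, tau b (b (σ i) * b j) = if i = j then 1 else 0 := fun i j => by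
    simp only [tau_apply, repr_basis_mul_basis hmul, hτ]
  have tilde_mul' := tilde_mul (tilde_basis_mul_basis hmul hσ hσN)
  obtain ⟨v, hv0, hv⟩ := exists_eigenvector hτ' hσ χ
  refine mul_right_cancel₀ (tau_tilde_mul_self_ne_zero hτ' hv0) ?_
  calc χ (b (σ i)) * tau b (tilde b σ v * v) = tau b (tilde b σ v * (b (σ i) * v)) := by
        rw [hv (b (σ i)), mul_smul_comm, map_smul, smul_eq_mul]
    _ = tau b (tilde b σ (b i * v) * v) := by
        rw [tilde_mul', tilde_basis, mul_left_comm, mul_assoc]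
    _ = conj (χ (b i)) * tau b (tilde b σ v * v) := by
        rw [hv (b i), map_smulₛₗ, smul_mul_assoc, map_smul, smul_eq_mul]

/-- The set of columns of the s-matrix of a `ℤ`-based rng is
closed under complex conjugation: for every character `χ` of `R_ℂ` and every
index `i` one has `χ(~b i) = conj (χ (b i))`, i.e. `s_{~i} = conj (s_i)`. -/
theorem zBasedRng_sMatrix_columns_conj
    {n : ℕ} (A : Type*) [CommRing A] [Algebra ℂ A]
    (b : Module.Basis (Fin n) ℂ A) (N : Fin n → Fin n → Fin n → ℤ) (σ : Fin n → Fin n)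
    (hmul : ∀ i j, b i * b j = ∑ m, (N i j m : ℂ) • b m)
    (hσ : ∀ i, σ (σ i) = i)
    (hσN : ∀ i j m, N (σ i) (σ j) m = N i j (σ m))
    (hτ : ∀ i j, (∑ m, (starRingEnd ℂ) (b.repr 1 m) * (N (σ i) j m : ℂ)) =
      if i = j then (1 : ℂ) else 0)
    (he : ∀ j, (starRingEnd ℂ) (b.repr 1 (σ j)) = b.repr 1 j) :
    ∀ (χ : A →ₐ[ℂ] ℂ) (i : Fin n), χ (b (σ i)) = (starRingEnd ℂ) (χ (b i)) :=
  zBasedRng_sMatrix_columns_conj_general A b N σ hmul hσ hσN hτ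
end

section
/- Let (R,B) be a ℤ-based rng with s-matrix s, let q ∈ ℕ and ζ a primitive complex q-th root of unity. Suppose every column of s has the form s_i = μ_i · v_i where μ_i is an integer and every entry of the vector v_i is a (nonzero) power of ζ. Then |μ_i| = |μ_j| for all indices i, j. -/
/-! The involution acts on every character as complex conjugation,
`φ (b (σ a)) = conj (φ (b a))`; this follows from the Frobenius reciprocity
`N (σ a) c m = N a m c` of the structure constants, obtained by reading both sides off
`τ (b (σ m) * b (σ a) * b c)`, where `τ = basisTau b` satisfies `τ (b (σ i) * x) = b.repr x i`.
Hence every character takes the value `|φ (b a)| ^ 2 = μ a ^ 2` on `b (σ a) * b a`, so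
`μ j ^ 2 • (b (σ i) * b i) - μ i ^ 2 • (b (σ j) * b j)` is killed by all `n` characters.
These span the dual of the `n`-dimensional algebra, so the element vanishes, and applying `τ`
gives `μ j ^ 2 = μ i ^ 2`. -/

open Finset ComplexConjugate

theorem eq_zero_of_forall_algHom_apply_eq_zero {K A ι : Type*} [Field K] [Ring A] [Algebra K A]
    [FiniteDimensional K A] [Fintype ι] {χ : ι → (A →ₐ[K] K)} (hχ : Function.Injective χ)
    (hcard : Fintype.card ι = Module.finrank K A) {x : A} (hx : ∀ k, χ k x = 0) : x = 0 := by
  have hspan := ((linearIndependent_algHom_toLinearMap K A K).comp χ hχ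
    ).span_eq_top_of_card_eq_finrank' (by rwa [Subspace.dual_finrank_eq])
  have hle : Submodule.span K (Set.range (AlgHom.toLinearMap ∘ χ)) ≤
      LinearMap.ker (Module.Dual.eval K A x) :=
    Submodule.span_le.mpr (by rintro _ ⟨k, rfl⟩; exact hx k)
  rw [hspan] at hle
  exact (Module.forall_dual_apply_eq_zero_iff K x).mp fun φ => hle Submodule.mem_top

theorem AlgHom.sum_basis_mul_conj_ne_zero {ι A : Type*} [Fintype ι] [Ring A] [Algebra ℂ A]
    (b : Module.Basis ι ℂ A) (φ : A →ₐ[ℂ] ℂ) : ∑ l, φ (b l) * conj (φ (b l)) ≠ 0 := by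
  obtain ⟨l, hl⟩ : ∃ l, φ (b l) ≠ 0 := by
    by_contra! h
    have := φ.map_one
    rw [← b.sum_repr 1, map_sum] at this
    simp [h] at this
  simp_rw [Complex.mul_conj]
  have hpos : 0 < ∑ i, Complex.normSq (φ (b i)) :=
    sum_pos' (fun i _ => Complex.normSq_nonneg _) ⟨l, mem_univ l, Complex.normSq_pos.mpr hl⟩
  exact_mod_cast hpos.ne'

section

variable {n : ℕ} {A : Type*} [CommRing A] [Algebra ℂ A] (b : Module.Basis (Fin n) ℂ A)
  {N : Fin n → Fin n → Fin n → ℤ} {σ : Fin n → Fin n}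

theorem repr_basis_mul_basis (hmul : ∀ i j, b i * b j = ∑ m, (N i j m : ℂ) • b m)
    (i j m : Fin n) : b.repr (b i * b j) m = N i j m := by
  rw [hmul, b.repr_sum_self]

theorem structConst_comm (hmul : ∀ i j, b i * b j = ∑ m, (N i j m : ℂ) • b m) (i j m : Fin n) :
    N i j m = N j i m := by
  have h := repr_basis_mul_basis b hmul i j m
  rw [mul_comm, repr_basis_mul_basis b hmul] at h
  exact_mod_cast h.symm

noncomputable def basisTau : Module.Dual ℂ A := ∑ m, conj (b.repr 1 m) • b.coord m

theorem basisTau_apply (x : A) : basisTau b x = ∑ m, conj (b.repr 1 m) * b.repr x m := by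
  simp [basisTau]

theorem basisTau_basis_mul (hmul : ∀ i j, b i * b j = ∑ m, (N i j m : ℂ) • b m)
    (hτ : ∀ i j, (∑ m, conj (b.repr 1 m) * (N (σ i) j m : ℂ)) = if i = j then (1 : ℂ) else 0)
    (i : Fin n) (x : A) : basisTau b (b (σ i) * x) = b.repr x i := by
  conv_lhs => rw [← b.sum_repr x]
  simp_rw [mul_sum, mul_smul_comm, map_sum, map_smul, basisTau_apply,
    repr_basis_mul_basis b hmul, hτ]
  simp

theorem structConst_frobenius (hmul : ∀ i j, b i * b j = ∑ m, (N i j m : ℂ) • b m)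
    (hσ : ∀ i, σ (σ i) = i) (hσN : ∀ i j m, N (σ i) (σ j) m = N i j (σ m))
    (hτ : ∀ i j, (∑ m, conj (b.repr 1 m) * (N (σ i) j m : ℂ)) = if i = j then (1 : ℂ) else 0)
    (a c m : Fin n) : N (σ a) c m = N a m c := by
  have key : (N (σ a) c m : ℂ) = N (σ m) (σ a) (σ c) :=
    calc (N (σ a) c m : ℂ) = basisTau b (b (σ m) * (b (σ a) * b c)) := by
          rw [basisTau_basis_mul b hmul hτ, repr_basis_mul_basis b hmul]
      _ = basisTau b (b (σ (σ c)) * (b (σ m) * b (σ a))) := by rw [hσ]; ring_nf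
      _ = N (σ m) (σ a) (σ c) := by
          rw [basisTau_basis_mul b hmul hτ, repr_basis_mul_basis b hmul]
  rw [hσN, hσ, structConst_comm b hmul m] at key
  exact_mod_cast key

theorem AlgHom.map_basis_mul_basis (hmul : ∀ i j, b i * b j = ∑ m, (N i j m : ℂ) • b m)
    (φ : A →ₐ[ℂ] ℂ) (a c : Fin n) : φ (b a) * φ (b c) = ∑ m, (N a c m : ℂ) * φ (b m) := by
  rw [← map_mul, hmul, map_sum]
  simp_rw [map_smul, smul_eq_mul]

theorem AlgHom.map_basis_involution_eq_conj
    (hmul : ∀ i j, b i * b j = ∑ m, (N i j m : ℂ) • b m)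
    (hσ : ∀ i, σ (σ i) = i) (hσN : ∀ i j m, N (σ i) (σ j) m = N i j (σ m))
    (hτ : ∀ i j, (∑ m, conj (b.repr 1 m) * (N (σ i) j m : ℂ)) = if i = j then (1 : ℂ) else 0)
    (φ : A →ₐ[ℂ] ℂ) (a : Fin n) : φ (b (σ a)) = conj (φ (b a)) := by
  refine mul_right_cancel₀ (φ.sum_basis_mul_conj_ne_zero b) ?_
  calc φ (b (σ a)) * ∑ l, φ (b l) * conj (φ (b l))
      = ∑ l, ∑ m, (N (σ a) l m : ℂ) * φ (b m) * conj (φ (b l)) := by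
        simp_rw [mul_sum, ← mul_assoc, φ.map_basis_mul_basis b hmul, sum_mul]
    _ = ∑ m, φ (b m) * conj (∑ l, (N a m l : ℂ) * φ (b l)) := by
        rw [sum_comm]
        simp_rw [structConst_frobenius b hmul hσ hσN hτ, map_sum, map_mul, map_intCast, mul_sum]
        exact sum_congr rfl fun _ _ => sum_congr rfl fun _ _ => by ring
    _ = conj (φ (b a)) * ∑ l, φ (b l) * conj (φ (b l)) := by
        simp_rw [← φ.map_basis_mul_basis b hmul, map_mul, mul_sum]
        exact sum_congr rfl fun _ _ => by ring

end

theorem normSq_pow_of_isPrimitiveRoot {ζ : ℂ} {q : ℕ} (hq : 0 < q) (hζ : IsPrimitiveRoot ζ q)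
    (t : ℕ) : Complex.normSq (ζ ^ t) = 1 := by
  rw [Complex.normSq_eq_norm_sq, norm_pow, hζ.norm'_eq_one hq.ne', one_pow, one_pow]

theorem zBasedRng_sMatrix_column_scalars_abs_eq_general
    {n : ℕ} (A : Type*) [CommRing A] [Algebra ℂ A]
    (b : Module.Basis (Fin n) ℂ A) (N : Fin n → Fin n → Fin n → ℤ) (σ : Fin n → Fin n)
    (hmul : ∀ i j, b i * b j = ∑ m, (N i j m : ℂ) • b m)
    (hσ : ∀ i, σ (σ i) = i)
    (hσN : ∀ i j m, N (σ i) (σ j) m = N i j (σ m))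
    (hτ : ∀ i j, (∑ m, (starRingEnd ℂ) (b.repr 1 m) * (N (σ i) j m : ℂ)) =
      if i = j then (1 : ℂ) else 0)
    (q : ℕ) (hq : 0 < q) (ζ : ℂ) (hζ : IsPrimitiveRoot ζ q)
    (χ : Fin n → (A →ₐ[ℂ] ℂ)) (hχ : Function.Injective χ)
    (μ : Fin n → ℤ) (v : Fin n → Fin n → ℂ)
    (hv : ∀ i k, ∃ t : ℕ, v i k = ζ ^ t)
    (hcol : ∀ k i, χ k (b i) = (μ i : ℂ) * v i k) :
    ∀ i j, |μ i| = |μ j| := by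
  intro i j
  have hsq : ∀ k a, χ k (b (σ a) * b a) = (μ a : ℂ) ^ 2 := by
    intro k a
    obtain ⟨t, ht⟩ := hv a k
    rw [map_mul, (χ k).map_basis_involution_eq_conj b hmul hσ hσN hτ,
      ← Complex.normSq_eq_conj_mul_self, hcol, ht, map_mul, normSq_pow_of_isPrimitiveRoot hq hζ,
      Complex.normSq_intCast]
    push_cast
    ring
  have : FiniteDimensional ℂ A := Module.Finite.of_basis b
  have hzero : (μ j : ℂ) ^ 2 • (b (σ i) * b i) - (μ i : ℂ) ^ 2 • (b (σ j) * b j) = 0 :=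
    eq_zero_of_forall_algHom_apply_eq_zero hχ (by simp [Module.finrank_eq_card_basis b])
      fun k => by simp only [map_sub, map_smul, hsq, smul_eq_mul]; ring
  have hτzero := congrArg (basisTau b) hzero
  simp only [map_sub, map_smul, basisTau_basis_mul b hmul hτ, Module.Basis.repr_self,
    Finsupp.single_eq_same, smul_eq_mul, mul_one, map_zero] at hτzero
  exact (sq_eq_sq_iff_abs_eq_abs _ _).mp (sub_eq_zero.mp (by exact_mod_cast hτzero)).symm

/-- Let `(R,B)` be a `ℤ`-based rng with s-matrix `s` (rows
given by an enumeration `χ : Fin n → (A →ₐ[ℂ] ℂ)` of the `n` distinct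
characters, `s k i = χ k (b i)`).  If every column has the form
`s_i = μ_i • v_i` with `μ_i ∈ ℤ` and all entries of `v_i` powers of a
primitive `q`-th root of unity `ζ`, then `|μ_i| = |μ_j|` for all `i, j`. -/
theorem zBasedRng_sMatrix_column_scalars_abs_eq
    {n : ℕ} (A : Type*) [CommRing A] [Algebra ℂ A]
    (b : Module.Basis (Fin n) ℂ A) (N : Fin n → Fin n → Fin n → ℤ) (σ : Fin n → Fin n)
    (hmul : ∀ i j, b i * b j = ∑ m, (N i j m : ℂ) • b m)
    (hσ : ∀ i, σ (σ i) = i)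
    (hσN : ∀ i j m, N (σ i) (σ j) m = N i j (σ m))
    (hτ : ∀ i j, (∑ m, (starRingEnd ℂ) (b.repr 1 m) * (N (σ i) j m : ℂ)) =
      if i = j then (1 : ℂ) else 0)
    (he : ∀ j, (starRingEnd ℂ) (b.repr 1 (σ j)) = b.repr 1 j)
    (q : ℕ) (hq : 0 < q) (ζ : ℂ) (hζ : IsPrimitiveRoot ζ q)
    (χ : Fin n → (A →ₐ[ℂ] ℂ)) (hχ : Function.Injective χ)
    (μ : Fin n → ℤ) (v : Fin n → Fin n → ℂ)
    (hv : ∀ i k, ∃ t : ℕ, v i k = ζ ^ t)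
    (hcol : ∀ k i, χ k (b i) = (μ i : ℂ) * v i k) :
    ∀ i j, |μ i| = |μ j| :=
  zBasedRng_sMatrix_column_scalars_abs_eq_general A b N σ hmul hσ hσN hτ q hq ζ hζ χ hχ μ v hv hcol
end

section
/- Let (R,B) be a ℤ-based rng and b ∈ B. Then there exists a natural number m ≥ 1 such that τ(b^m) ≠ 0. -/
/-!
Left multiplication by `b i`, written in the coordinates of `B`, is a normal operator `f` on `ℂⁿ`
with its standard inner product: the axioms on `~` and `τ` make its adjoint multiplication by
`~b i`. Since `τ x = ⟪e, x⟫` in these coordinates, `τ ((b i) ^ m) = ⟪e, f ^ m e⟫`.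
For a normal operator, `⟪v, f ^ m v⟫ = 0` for all `m ≥ 1` forces `f v = 0`: split `v` along
`ker f ⊕ (ker f)ᗮ`; the kernel part contributes nothing because `ker f = ker f⋆`, and for
`w ∈ (ker f)ᗮ`, writing the characteristic polynomial as `X ^ r * q` with `q 0 ≠ 0`, the vector
`q(f) w` lies in `ker (f ^ r) = ker f`, so `0 = ⟪w, q(f) w⟫ = q 0 * ‖w‖²`. With `v = e` this gives
`b i = b i * e = 0`, which is absurd.
-/

open Polynomial
open scoped ComplexConjugate

namespace LinearMap

variable {𝕜 E : Type*} [RCLike 𝕜] [NormedAddCommGroup E] [InnerProductSpace 𝕜 E] {f : E →ₗ[𝕜] E}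

local notation "⟪" x ", " y "⟫" => inner 𝕜 x y

lemma inner_aeval_apply_eq_coeff_zero_mul {w : E} (hw : ∀ m, m ≠ 0 → ⟪w, (f ^ m) w⟫ = 0)
    (q : 𝕜[X]) : ⟪w, aeval f q w⟫ = q.coeff 0 * ⟪w, w⟫ := by
  rw [aeval_eq_sum_range, sum_apply, inner_sum, Finset.sum_range_succ']
  simp [inner_smul_right, hw]

variable [FiniteDimensional 𝕜 E]

lemma IsStarNormal.adjoint_apply_eq_zero (hf : IsStarNormal f) {x : E} (hx : f x = 0) :
    adjoint f x = 0 := by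
  have h : ⟪adjoint f x, adjoint f x⟫ = ⟪f x, f x⟫ := by
    rw [adjoint_inner_left, ← adjoint_inner_right, ← Module.End.mul_apply, ← star_eq_adjoint,
      ← Module.End.mul_apply, hf.star_comm_self.eq]
  rwa [hx, inner_zero_left, inner_self_eq_zero] at h

lemma IsStarNormal.apply_eq_zero_of_apply_apply_eq_zero (hf : IsStarNormal f) {x : E}
    (hx : f (f x) = 0) : f x = 0 := by
  rw [← inner_self_eq_zero (𝕜 := 𝕜), ← adjoint_inner_right,
    IsStarNormal.adjoint_apply_eq_zero hf hx, inner_zero_right]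

lemma IsStarNormal.apply_eq_zero_of_pow_apply_eq_zero (hf : IsStarNormal f) {x : E} {k : ℕ}
    (hk : k ≠ 0) (hx : (f ^ k) x = 0) : f x = 0 := by
  induction k generalizing x with
  | zero => exact absurd rfl hk
  | succ k ih =>
    rcases eq_or_ne k 0 with rfl | hk
    · simpa using hx
    · rw [pow_succ, Module.End.mul_apply] at hx
      exact IsStarNormal.apply_eq_zero_of_apply_apply_eq_zero hf (ih hk hx)

lemma IsStarNormal.exists_coeff_zero_ne_zero_mul_aeval_eq_zero (hf : IsStarNormal f) :
    ∃ q : 𝕜[X], q.coeff 0 ≠ 0 ∧ f * aeval f q = 0 := by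
  obtain ⟨q, hcharpoly, hq⟩ :=
    f.charpoly.exists_eq_pow_rootMultiplicity_mul_and_not_dvd f.charpoly_monic.ne_zero 0
  rw [map_zero, sub_zero] at hcharpoly hq
  refine ⟨q, fun h ↦ hq (X_dvd_iff.mpr h), LinearMap.ext fun x ↦ ?_⟩
  have hx : (f ^ rootMultiplicity 0 f.charpoly) (aeval f q x) = 0 := by
    rw [← Module.End.mul_apply, ← aeval_X_pow (R := 𝕜), ← map_mul, ← hcharpoly,
      aeval_self_charpoly, zero_apply]
  rcases eq_or_ne (rootMultiplicity 0 f.charpoly) 0 with h0 | h0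
  · rw [h0, pow_zero, Module.End.one_apply] at hx
    rw [Module.End.mul_apply, hx, map_zero, zero_apply]
  · exact IsStarNormal.apply_eq_zero_of_pow_apply_eq_zero hf h0 hx

lemma IsStarNormal.eq_zero_of_mem_orthogonal_ker (hf : IsStarNormal f) {w : E}
    (hker : w ∈ (ker f)ᗮ) (hw : ∀ m, m ≠ 0 → ⟪w, (f ^ m) w⟫ = 0) : w = 0 := by
  obtain ⟨q, hq0, hfq⟩ := IsStarNormal.exists_coeff_zero_ne_zero_mul_aeval_eq_zero hf
  have hqw : aeval f q w ∈ ker f := by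
    rw [mem_ker, ← Module.End.mul_apply, hfq, zero_apply]
  have h : ⟪w, aeval f q w⟫ = 0 := by
    rw [← inner_conj_symm, Submodule.inner_right_of_mem_orthogonal hqw hker, map_zero]
  rw [inner_aeval_apply_eq_coeff_zero_mul hw, mul_eq_zero, inner_self_eq_zero] at h
  exact h.resolve_left hq0

theorem IsStarNormal.apply_eq_zero_of_inner_pow_apply_eq_zero (hf : IsStarNormal f) {v : E}
    (hv : ∀ m, m ≠ 0 → ⟪v, (f ^ m) v⟫ = 0) : f v = 0 := by
  obtain ⟨u, hu, w, hw, rfl⟩ := (ker f).exists_add_mem_mem_orthogonal v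
  have hu_pow : ∀ m, m ≠ 0 → (f ^ m) u = 0 := fun m hm ↦ by
    obtain ⟨k, rfl⟩ := Nat.exists_eq_succ_of_ne_zero hm
    rw [pow_succ, Module.End.mul_apply, mem_ker.mp hu, map_zero]
  have hu_inner : ∀ m, m ≠ 0 → ∀ x, ⟪u, (f ^ m) x⟫ = 0 := fun m hm x ↦ by
    obtain ⟨k, rfl⟩ := Nat.exists_eq_succ_of_ne_zero hm
    rw [pow_succ', Module.End.mul_apply, ← adjoint_inner_left,
      IsStarNormal.adjoint_apply_eq_zero hf hu, inner_zero_left]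
  have hw0 : w = 0 := IsStarNormal.eq_zero_of_mem_orthogonal_ker hf hw fun m hm ↦ by
    simpa [inner_add_left, hu_inner m hm, hu_pow m hm] using hv m hm
  rw [hw0, add_zero]
  exact hu

end LinearMap

namespace Module.Basis

variable {𝕜 ι A : Type*} [RCLike 𝕜] [Fintype ι] [CommRing A] [Algebra 𝕜 A] (b : Basis ι 𝕜 A)

local notation "⟪" x ", " y "⟫" => inner 𝕜 x y

noncomputable def euclideanEquiv : A ≃ₗ[𝕜] EuclideanSpace 𝕜 ι :=
  b.equivFun.trans (WithLp.linearEquiv 2 𝕜 (ι → 𝕜)).symm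

@[simp]
lemma euclideanEquiv_apply (x : A) (j : ι) : b.euclideanEquiv x j = b.repr x j := rfl

lemma inner_euclideanEquiv (x y : A) :
    ⟪b.euclideanEquiv x, b.euclideanEquiv y⟫ = ∑ j, conj (b.repr x j) * b.repr y j := by
  simp [PiLp.inner_apply, mul_comm]

lemma inner_euclideanEquiv_basis_left [DecidableEq ι] (a : ι) (y : A) :
    ⟪b.euclideanEquiv (b a), b.euclideanEquiv y⟫ = b.repr y a := by
  simp [inner_euclideanEquiv, Finsupp.single_apply]

noncomputable def euclideanLmul : A →ₐ[𝕜] Module.End 𝕜 (EuclideanSpace 𝕜 ι) :=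
  (b.euclideanEquiv.conjAlgEquiv 𝕜).toAlgHom.comp (Algebra.lmul 𝕜 A)

lemma euclideanLmul_apply (x y : A) :
    b.euclideanLmul x (b.euclideanEquiv y) = b.euclideanEquiv (x * y) := by
  simp [euclideanLmul]

variable {b} [DecidableEq ι] {σ : ι → ι}

lemma repr_eq_inner_one_mul_basis
    (hτ : ∀ a c, ⟪b.euclideanEquiv 1, b.euclideanEquiv (b (σ a) * b c)⟫ = if a = c then 1 else 0)
    (x : A) (m : ι) : b.repr x m = ⟪b.euclideanEquiv 1, b.euclideanEquiv (x * b (σ m))⟫ := by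
  conv_rhs => rw [← b.sum_repr x, Finset.sum_mul]
  simp only [smul_mul_assoc, map_sum, map_smul, inner_sum, inner_smul_right,
    mul_comm (b _) (b (σ m)), hτ]
  simp

/-- `σ` is `~` on indices, and `⟪b.euclideanEquiv 1, b.euclideanEquiv x⟫` is `τ x`. -/
structure IsBasedInvolution (b : Basis ι 𝕜 A) (σ : ι → ι) : Prop where
  involutive : Function.Involutive σ
  repr_mul : ∀ a c m, b.repr (b (σ a) * b (σ c)) m = conj (b.repr (b a * b c) (σ m))
  inner_one_mul : ∀ a c,
    ⟪b.euclideanEquiv 1, b.euclideanEquiv (b (σ a) * b c)⟫ = if a = c then 1 else 0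

lemma IsBasedInvolution.conj_repr_mul (hσ : IsBasedInvolution b σ) (i a c : ι) :
    conj (b.repr (b (σ i) * b a) c) = b.repr (b i * b c) a := by
  have h : b.repr (b (σ i) * b a) c = b.repr (b (σ i) * b (σ c)) (σ a) := by
    rw [repr_eq_inner_one_mul_basis hσ.inner_one_mul, repr_eq_inner_one_mul_basis hσ.inner_one_mul,
      hσ.involutive a, mul_right_comm]
  rw [h, hσ.repr_mul, hσ.involutive a, RCLike.conj_conj]

lemma IsBasedInvolution.adjoint_euclideanLmul (hσ : IsBasedInvolution b σ)
    (i : ι) : LinearMap.adjoint (b.euclideanLmul (b i)) = b.euclideanLmul (b (σ i)) := by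
  symm
  rw [LinearMap.eq_adjoint_iff_basis (b.map b.euclideanEquiv) (b.map b.euclideanEquiv)]
  intro a c
  simp only [map_apply, euclideanLmul_apply, ← inner_conj_symm (b.euclideanEquiv (b _ * b _)),
    inner_euclideanEquiv_basis_left, hσ.conj_repr_mul]

lemma IsBasedInvolution.isStarNormal_euclideanLmul (hσ : IsBasedInvolution b σ)
    (i : ι) : IsStarNormal (b.euclideanLmul (b i)) :=
  ⟨by rw [LinearMap.star_eq_adjoint, hσ.adjoint_euclideanLmul]
      exact (Commute.all _ _).map _⟩

end Module.Basis

theorem zBasedRng_exists_pow_tau_ne_zero_general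
    {n : ℕ} (A : Type*) [CommRing A] [Algebra ℂ A]
    (b : Module.Basis (Fin n) ℂ A) (N : Fin n → Fin n → Fin n → ℤ) (σ : Fin n → Fin n)
    (hmul : ∀ i j, b i * b j = ∑ m, (N i j m : ℂ) • b m)
    (hσ : ∀ i, σ (σ i) = i)
    (hσN : ∀ i j m, N (σ i) (σ j) m = N i j (σ m))
    (hτ : ∀ i j, (∑ m, (starRingEnd ℂ) (b.repr 1 m) * (N (σ i) j m : ℂ)) =
      if i = j then (1 : ℂ) else 0) :
    ∀ i : Fin n, ∃ m : ℕ, 1 ≤ m ∧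
      (∑ j, (starRingEnd ℂ) (b.repr 1 j) * b.repr ((b i) ^ m) j) ≠ 0 := by
  have hN : ∀ a c m, b.repr (b a * b c) m = N a c m := fun a c m ↦ by
    simp [hmul, Finsupp.single_apply]
  have hbased : b.IsBasedInvolution σ :=
    { involutive := hσ
      repr_mul := fun a c m ↦ by simp [hN, hσN]
      inner_one_mul := fun a c ↦ by simp only [b.inner_euclideanEquiv, hN, hτ] }
  intro i
  by_contra! h
  have hbi := LinearMap.IsStarNormal.apply_eq_zero_of_inner_pow_apply_eq_zero
    (hbased.isStarNormal_euclideanLmul i) (v := b.euclideanEquiv 1) fun m hm ↦ by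
      rw [← map_pow, b.euclideanLmul_apply, mul_one, b.inner_euclideanEquiv]
      exact h m (Nat.one_le_iff_ne_zero.mpr hm)
  rw [b.euclideanLmul_apply, mul_one, LinearEquiv.map_eq_zero_iff] at hbi
  exact b.ne_zero i hbi

/-- Let `(R,B)` be a `ℤ`-based rng and `b i ∈ B`.  Then there
is a natural number `m ≥ 1` with `τ((b i)^m) ≠ 0`, where
`τ(x) = ∑ j, conj(e_j) ⬝ (coordinate of x at j)` and `e_j = b.repr 1 j`. -/
theorem zBasedRng_exists_pow_tau_ne_zero
    {n : ℕ} (A : Type*) [CommRing A] [Algebra ℂ A]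
    (b : Module.Basis (Fin n) ℂ A) (N : Fin n → Fin n → Fin n → ℤ) (σ : Fin n → Fin n)
    (hmul : ∀ i j, b i * b j = ∑ m, (N i j m : ℂ) • b m)
    (hσ : ∀ i, σ (σ i) = i)
    (hσN : ∀ i j m, N (σ i) (σ j) m = N i j (σ m))
    (hτ : ∀ i j, (∑ m, (starRingEnd ℂ) (b.repr 1 m) * (N (σ i) j m : ℂ)) =
      if i = j then (1 : ℂ) else 0)
    (he : ∀ j, (starRingEnd ℂ) (b.repr 1 (σ j)) = b.repr 1 j) :
    ∀ i : Fin n, ∃ m : ℕ, 1 ≤ m ∧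
      (∑ j, (starRingEnd ℂ) (b.repr 1 j) * b.repr ((b i) ^ m) j) ≠ 0 :=
  zBasedRng_exists_pow_tau_ne_zero_general A b N σ hmul hσ hσN hτ
end

section
/- Let (R,B) be a ℤ-based rng and B' ⊆ B a closed subset, and write e = Σ_{b∈B} e_b·b for the identity of R_ℂ. Then the element e' := Σ_{b∈B'} e_b·b satisfies e'·r = r for every r in the ℂ-span of B' inside R_ℂ; consequently the subring of R spanned by B', together with the restrictions of ~ and τ, is itself a ℤ-based rng. -/
open scoped BigOperators

/-- The purely combinatorial data of a `ℤ`-based rng on an index set `ι`: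
structure constants `N`, the coordinates `e` of the identity of the
complexification, and the basis involution `σ`, subject to the axioms of a
`ℤ`-based rng. -/
structure IsZBasedRngData {ι : Type*} [Fintype ι] [DecidableEq ι]
    (N : ι → ι → ι → ℤ) (e : ι → ℂ) (σ : ι → ι) : Prop where
  comm : ∀ i j m, N i j m = N j i m
  assoc : ∀ i j k m, (∑ l, N i j l * N l k m) = ∑ l, N j k l * N i l m
  one : ∀ j m, (∑ i, e i * (N i j m : ℂ)) = if j = m then (1 : ℂ) else 0
  invol : ∀ i, σ (σ i) = i
  conjN : ∀ i j m, N (σ i) (σ j) m = N i j (σ m)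
  tau : ∀ i j, (∑ m, (starRingEnd ℂ) (e m) * (N (σ i) j m : ℂ)) =
    if i = j then (1 : ℂ) else 0
  conje : ∀ j, (starRingEnd ℂ) (e (σ j)) = e j

/-!
The heart of the matter is that a closed subset `B'` is stable under the involution `σ`. Once
it is, the axioms restrict from `B` to `B'`: the structure constants `N i j m` with `i, j ∈ B'`
vanish for `m ∉ B'` by closedness and, by Frobenius reciprocity `N i j m = N (σ m) j (σ i)`, also
for `i ∉ B'` when `j, m ∈ B'`, so every sum in the axioms may be cut down to `B'`.

For the stability, `star x := ∑ i, conj (x (σ i)) • b i` makes `R_ℂ` a commutative star algebra in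
which `τ (star x * x) = ∑ i, |x i|²`, so `star x * x = 0` forces `x = 0`. Then `R_ℂ` has no
nilpotents, multiplication by `v` acts on each of its generalized eigenspaces by a scalar `μ`, and
`star v` acts there by `conj μ`. Hence `star v = p(v)` for a polynomial `p` interpolating `conj` on
the eigenvalues and on `0`; as `p(0) = 0`, `p(v)` lies in every non-unital subalgebra containing
`v`, and `b (σ j) = star (b j)` lies in the span of `B'` whenever `b j` does.
-/

open Polynomial

theorem Finset.sum_coe_sort_eq_sum_univ {ι M : Type*} [Fintype ι] [AddCommMonoid M] {s : Finset ι}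
    {f : ι → M} (hf : ∀ i ∉ s, f i = 0) : ∑ i : {x // x ∈ s}, f i = ∑ i, f i :=
  (Finset.sum_coe_sort s f).trans <| Finset.sum_subset (Finset.subset_univ _) fun i _ hi => hf i hi

namespace IsZBasedRngData

variable {ι : Type*} [Fintype ι] [DecidableEq ι] {N : ι → ι → ι → ℤ} {e : ι → ℂ} {σ : ι → ι}

theorem frobenius (h : IsZBasedRngData N e σ) (i j m : ι) : N i j m = N (σ m) j (σ i) := by
  have tau_comm : ∀ k l, (∑ p, starRingEnd ℂ (e p) * (N l (σ k) p : ℂ)) = if k = l then 1 else 0 :=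
    fun k l => by simpa only [h.comm l] using h.tau k l
  -- Both sides are `τ (b i * b j * b (σ m))`, expanded along the two bracketings.
  have key : (N i j m : ℂ) = N j (σ m) (σ i) := calc
    (N i j m : ℂ) = ∑ l, (N i j l : ℂ) * ∑ p, starRingEnd ℂ (e p) * N l (σ m) p := by
      simp [tau_comm]
    _ = ∑ p, starRingEnd ℂ (e p) * ∑ l, ((N i j l * N l (σ m) p : ℤ) : ℂ) := by
      simp only [Finset.mul_sum, Int.cast_mul]
      rw [Finset.sum_comm]
      exact Finset.sum_congr rfl fun _ _ => Finset.sum_congr rfl fun _ _ => by ring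
    _ = ∑ p, starRingEnd ℂ (e p) * ∑ l, ((N j (σ m) l * N i l p : ℤ) : ℂ) := by
      simp only [← Int.cast_sum, h.assoc]
    _ = ∑ l, (N j (σ m) l : ℂ) * ∑ p, starRingEnd ℂ (e p) * N (σ (σ i)) l p := by
      simp only [Finset.mul_sum, Int.cast_mul, h.invol]
      rw [Finset.sum_comm]
      exact Finset.sum_congr rfl fun _ _ => Finset.sum_congr rfl fun _ _ => by ring
    _ = N j (σ m) (σ i) := by simp [h.tau]
  rw [h.comm (σ m)]
  exact_mod_cast key

variable {B' : Finset ι}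

theorem structConst_eq_zero_of_notMem (h : IsZBasedRngData N e σ)
    (hclosed : ∀ i ∈ B', ∀ j ∈ B', ∀ m ∉ B', N i j m = 0) (hσ : ∀ i ∈ B', σ i ∈ B') {i j m : ι}
    (hi : i ∉ B') (hj : j ∈ B') (hm : m ∈ B') :
    N i j m = 0 := by
  rw [h.frobenius]
  refine hclosed _ (hσ m hm) j hj _ fun hσi => hi ?_
  simpa only [h.invol] using hσ _ hσi

theorem sum_mul_structConst_of_mem (h : IsZBasedRngData N e σ)
    (hclosed : ∀ i ∈ B', ∀ j ∈ B', ∀ m ∉ B', N i j m = 0) (hσ : ∀ i ∈ B', σ i ∈ B') {j : ι}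
    (hj : j ∈ B') (m : ι) :
    ∑ i ∈ B', e i * (N i j m : ℂ) = if j = m then 1 else 0 := by
  by_cases hm : m ∈ B'
  · rw [← h.one j m]
    refine Finset.sum_subset (Finset.subset_univ _) fun i _ hi => ?_
    rw [h.structConst_eq_zero_of_notMem hclosed hσ hi hj hm, Int.cast_zero, mul_zero]
  · rw [if_neg (ne_of_mem_of_not_mem hj hm)]
    exact Finset.sum_eq_zero fun i hi => by rw [hclosed i hi j hj m hm, Int.cast_zero, mul_zero]

theorem restrict (h : IsZBasedRngData N e σ)
    (hclosed : ∀ i ∈ B', ∀ j ∈ B', ∀ m ∉ B', N i j m = 0) (hσ : ∀ i ∈ B', σ i ∈ B') :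
    IsZBasedRngData (fun i j m : {x // x ∈ B'} => N i.1 j.1 m.1) (fun i => e i.1)
      (fun i => ⟨σ i.1, hσ i.1 i.2⟩) where
  comm i j m := h.comm i j m
  assoc i j k m := by
    rw [Finset.sum_coe_sort_eq_sum_univ (f := fun l => N i j l * N l k m)
        fun l hl => by rw [hclosed i i.2 j j.2 l hl, zero_mul],
      Finset.sum_coe_sort_eq_sum_univ (f := fun l => N j k l * N i l m)
        fun l hl => by rw [hclosed j j.2 k k.2 l hl, zero_mul], h.assoc]
  one j m := by
    rw [Finset.sum_coe_sort B' (fun i => e i * (N i j m : ℂ)),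
      h.sum_mul_structConst_of_mem hclosed hσ j.2]
    simp only [Subtype.ext_iff]
  invol i := Subtype.ext (h.invol i)
  conjN i j m := h.conjN i j m
  tau i j := by
    rw [Finset.sum_coe_sort_eq_sum_univ (f := fun m => starRingEnd ℂ (e m) * (N (σ i) j m : ℂ))
        fun m hm => by rw [hclosed _ (hσ i i.2) j j.2 m hm, Int.cast_zero, mul_zero], h.tau]
    simp only [Subtype.ext_iff]
  conje j := h.conje j

end IsZBasedRngData

section PolynomialEval

variable {R A : Type*} [CommRing R] [Ring A] [Algebra R A]

theorem aeval_mul_eq_eval_smul_of_mul_eq_smul {v x : A} {μ : R} (h : v * x = μ • x) (p : R[X]) :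
    aeval v p * x = p.eval μ • x := by
  induction p using Polynomial.induction_on' with
  | add p q hp hq => rw [map_add, add_mul, hp, hq, eval_add, add_smul]
  | monomial k c =>
    have : v ^ k * x = μ ^ k • x := by
      induction k with
      | zero => simp
      | succ k ih => rw [pow_succ, mul_assoc, h, mul_smul_comm, ih, smul_smul, pow_succ']
    rw [aeval_monomial, eval_monomial, ← Algebra.smul_def, smul_mul_assoc, this, smul_smul]

theorem NonUnitalSubalgebra.aeval_mem_of_coeff_zero_eq_zero (S : NonUnitalSubalgebra R A) {v : A}
    (hv : v ∈ S) {p : R[X]} (hp : p.coeff 0 = 0) : aeval v p ∈ S := by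
  have hpow : ∀ k, v ^ (k + 1) ∈ S := fun k => by
    induction k with
    | zero => simpa using hv
    | succ k ih => rw [pow_succ]; exact S.mul_mem ih hv
  rw [aeval_eq_sum_range]
  refine S.sum_mem fun i _ => ?_
  rcases i with _ | k
  · simp [hp]
  · exact S.smul_mem _ (hpow k)

end PolynomialEval

section FaithfulStar

variable {A : Type*} [CommRing A] [StarRing A]

theorem star_mul_eq_zero_of_mul_eq_zero (hfaith : ∀ x : A, star x * x = 0 → x = 0)
    {w x : A} (h : w * x = 0) : star w * x = 0 :=
  hfaith _ <| by
    calc star (star w * x) * (star w * x) = star x * star w * (w * x) := by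
          rw [star_mul, star_star]; ring
      _ = 0 := by rw [h, mul_zero]

theorem mul_eq_zero_of_mul_mul_eq_zero (hfaith : ∀ x : A, star x * x = 0 → x = 0)
    {w x : A} (h : w * (w * x) = 0) : w * x = 0 :=
  hfaith _ <| by
    calc star (w * x) * (w * x) = star x * (star w * (w * x)) := by rw [star_mul]; ring
      _ = 0 := by rw [star_mul_eq_zero_of_mul_eq_zero hfaith h, mul_zero]

theorem mul_eq_zero_of_pow_mul_eq_zero (hfaith : ∀ x : A, star x * x = 0 → x = 0)
    {w x : A} {k : ℕ} (hk : k ≠ 0) (h : w ^ k * x = 0) : w * x = 0 := by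
  induction k generalizing x with
  | zero => exact absurd rfl hk
  | succ k ih =>
    rcases eq_or_ne k 0 with rfl | hk'
    · simpa using h
    · exact mul_eq_zero_of_mul_mul_eq_zero hfaith (ih hk' (by rw [← mul_assoc, ← pow_succ, h]))

variable [Algebra ℂ A]

theorem mul_eq_smul_of_mem_maxGenEigenspace (hfaith : ∀ x : A, star x * x = 0 → x = 0)
    {v x : A} {μ : ℂ} (hx : x ∈ Module.End.maxGenEigenspace (LinearMap.mulLeft ℂ v) μ) :
    v * x = μ • x := by
  obtain ⟨k, hk⟩ := (Module.End.mem_maxGenEigenspace _ _ _).mp hx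
  have hw : LinearMap.mulLeft ℂ v - μ • 1 = LinearMap.mulLeft ℂ (v - μ • 1) := by
    ext y
    simp only [LinearMap.sub_apply, LinearMap.mulLeft_apply, LinearMap.smul_apply,
      Module.End.one_apply, sub_mul, smul_one_mul]
  rw [hw, LinearMap.pow_mulLeft, LinearMap.mulLeft_apply] at hk
  rw [← sub_eq_zero, ← smul_one_mul, ← sub_mul]
  rcases eq_or_ne k 0 with rfl | hk0
  · rw [pow_zero, one_mul] at hk
    rw [hk, mul_zero]
  · exact mul_eq_zero_of_pow_mul_eq_zero hfaith hk0 hk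

variable [StarModule ℂ A]

theorem star_mul_eq_conj_smul_of_mul_eq_smul (hfaith : ∀ x : A, star x * x = 0 → x = 0)
    {v x : A} {μ : ℂ} (h : v * x = μ • x) : star v * x = starRingEnd ℂ μ • x := by
  have hw : (v - μ • 1) * x = 0 := by rw [sub_mul, smul_one_mul, h, sub_self]
  have := star_mul_eq_zero_of_mul_eq_zero hfaith hw
  rwa [star_sub, star_smul, star_one, sub_mul, smul_one_mul, sub_eq_zero] at this

theorem exists_star_eq_aeval [FiniteDimensional ℂ A] (hfaith : ∀ x : A, star x * x = 0 → x = 0)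
    (v : A) : ∃ p : ℂ[X], p.coeff 0 = 0 ∧ star v = aeval v p := by
  classical
  set f : Module.End ℂ A := LinearMap.mulLeft ℂ v
  set s : Finset ℂ := insert 0 f.finite_hasEigenvalue.toFinset
  set p := Lagrange.interpolate s id (starRingEnd ℂ)
  have hp : ∀ μ ∈ s, p.eval μ = starRingEnd ℂ μ := fun μ hμ =>
    Lagrange.eval_interpolate_at_node _ (Set.injOn_id _) hμ
  refine ⟨p, by rw [coeff_zero_eq_eval_zero, hp 0 (Finset.mem_insert_self _ _), map_zero], ?_⟩
  suffices h : ∀ x, star v * x = aeval v p * x by simpa using h 1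
  intro x
  have hx : x ∈ ⨆ μ, f.maxGenEigenspace μ := by
    rw [Module.End.iSup_maxGenEigenspace_eq_top]; trivial
  induction hx using Submodule.iSup_induction' with
  | mem μ x hx =>
    have hvx := mul_eq_smul_of_mem_maxGenEigenspace hfaith hx
    rcases eq_or_ne x 0 with rfl | hx0
    · simp
    have hμ : μ ∈ s := Finset.mem_insert_of_mem <| Set.Finite.mem_toFinset _ |>.mpr <|
      Module.End.hasEigenvalue_of_hasEigenvector ⟨Module.End.mem_eigenspace_iff.mpr hvx, hx0⟩
    rw [star_mul_eq_conj_smul_of_mul_eq_smul hfaith hvx,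
      aeval_mul_eq_eval_smul_of_mul_eq_smul hvx, hp μ hμ]
  | zero => simp
  | add x y _ _ hx hy => rw [mul_add, mul_add, hx, hy]

theorem NonUnitalSubalgebra.star_mem_of_faithful [FiniteDimensional ℂ A]
    (hfaith : ∀ x : A, star x * x = 0 → x = 0) (S : NonUnitalSubalgebra ℂ A) {v : A}
    (hv : v ∈ S) : star v ∈ S := by
  obtain ⟨p, hp0, hp⟩ := exists_star_eq_aeval hfaith v
  exact hp ▸ S.aeval_mem_of_coeff_zero_eq_zero hv hp0

end FaithfulStar

theorem mul_mem_span_of_mul_mem_span_int {R A : Type*} [CommRing R] [Ring A] [Algebra R A]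
    {s : Set A}
    (hs : ∀ x ∈ Submodule.span ℤ s, ∀ y ∈ Submodule.span ℤ s, x * y ∈ Submodule.span ℤ s)
    {x y : A} (hx : x ∈ Submodule.span R s) (hy : y ∈ Submodule.span R s) :
    x * y ∈ Submodule.span R s := by
  have hxy := Submodule.mul_mem_mul hx hy
  rw [Submodule.span_mul_span] at hxy
  refine Submodule.span_le.mpr ?_ hxy
  rintro _ ⟨u, hu, v, hv, rfl⟩
  exact Submodule.span_le_restrictScalars ℤ R _
    (hs u (Submodule.subset_span hu) v (Submodule.subset_span hv))

section BasisAlgebra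

variable {ι : Type*} [Fintype ι] {A : Type*} [CommRing A] [Algebra ℂ A]
  (b : Module.Basis ι ℂ A) {N : ι → ι → ι → ℤ} {σ : ι → ι}

theorem repr_basis_mul (hmul : ∀ i j, b i * b j = ∑ m, (N i j m : ℂ) • b m) (i j m : ι) :
    b.repr (b i * b j) m = N i j m := by
  classical
  simp [hmul, Finsupp.single_apply]

theorem repr_mul_basis (hmul : ∀ i j, b i * b j = ∑ m, (N i j m : ℂ) • b m) (x : A) (j m : ι) :
    b.repr (x * b j) m = ∑ i, b.repr x i * N i j m := by
  have hx : x * b j = ∑ i, b.repr x i • (b i * b j) := by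
    conv_lhs => rw [← b.sum_repr x]
    simp only [Finset.sum_mul, smul_mul_assoc]
  simp [hx, repr_basis_mul b hmul]

theorem isZBasedRngData_of_basis [DecidableEq ι]
    (hmul : ∀ i j, b i * b j = ∑ m, (N i j m : ℂ) • b m)
    (hσ : Function.Involutive σ) (hσN : ∀ i j m, N (σ i) (σ j) m = N i j (σ m))
    (hτ : ∀ i j, (∑ m, (starRingEnd ℂ) (b.repr 1 m) * (N (σ i) j m : ℂ)) =
      if i = j then (1 : ℂ) else 0)
    (he : ∀ j, (starRingEnd ℂ) (b.repr 1 (σ j)) = b.repr 1 j) :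
    IsZBasedRngData N (b.repr 1) σ := by
  have comm : ∀ i j m, N i j m = N j i m := fun i j m => by
    have h := repr_basis_mul b hmul i j m
    rw [mul_comm, repr_basis_mul b hmul] at h
    exact_mod_cast h.symm
  refine ⟨comm, fun i j k m => ?_, fun j m => ?_, hσ, hσN, hτ, he⟩
  · have h : b.repr (b i * b j * b k) m = b.repr (b j * b k * b i) m := by ring_nf
    simp only [repr_mul_basis b hmul _ _ m, repr_basis_mul b hmul, comm _ i m] at h
    exact_mod_cast h
  · simpa [repr_basis_mul b hmul, Finsupp.single_apply] using (repr_mul_basis b hmul 1 j m).symm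

variable (σ) in
noncomputable def basisStar : A →ₗ⋆[ℂ] A where
  toFun x := ∑ i, starRingEnd ℂ (b.repr x (σ i)) • b i
  map_add' x y := by simp [add_smul, Finset.sum_add_distrib]
  map_smul' c x := by simp [Finset.smul_sum, smul_smul]

theorem repr_basisStar (x : A) (i : ι) :
    b.repr (basisStar b σ x) i = starRingEnd ℂ (b.repr x (σ i)) := by
  simp only [basisStar, LinearMap.coe_mk, AddHom.coe_mk, b.repr_sum_self]

theorem basisStar_self (hσ : Function.Involutive σ) (i : ι) : basisStar b σ (b i) = b (σ i) := by
  classical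
  refine b.ext_elem fun k => ?_
  simp only [repr_basisStar, Module.Basis.repr_self, Finsupp.single_apply, hσ.eq_iff]
  split_ifs <;> simp_all

theorem basisStar_basisStar (hσ : Function.Involutive σ) (x : A) :
    basisStar b σ (basisStar b σ x) = x :=
  b.ext_elem fun k => by simp [repr_basisStar, hσ k]

theorem basisStar_mul (hmul : ∀ i j, b i * b j = ∑ m, (N i j m : ℂ) • b m)
    (hσ : Function.Involutive σ) (hσN : ∀ i j m, N (σ i) (σ j) m = N i j (σ m)) (x y : A) :
    basisStar b σ (x * y) = basisStar b σ x * basisStar b σ y := by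
  have hbasis : ∀ i j, basisStar b σ (b i * b j) = basisStar b σ (b i) * basisStar b σ (b j) := by
    intro i j
    rw [basisStar_self b hσ, basisStar_self b hσ, hmul, hmul, map_sum]
    simp only [map_smulₛₗ, map_intCast, basisStar_self b hσ, hσN]
    conv_rhs => rw [← Equiv.sum_comp (hσ.toPerm σ)]
    simp only [Function.Involutive.coe_toPerm, hσ _]
  have hleft : ∀ i, basisStar b σ (b i * y) = basisStar b σ (b i) * basisStar b σ y := fun i =>
    DFunLike.congr_fun (b.ext (f₁ := (basisStar b σ).comp (LinearMap.mulLeft ℂ (b i)))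
      (f₂ := (LinearMap.mulLeft ℂ (basisStar b σ (b i))).comp (basisStar b σ)) (hbasis i)) y
  exact DFunLike.congr_fun (b.ext (f₁ := (basisStar b σ).comp (LinearMap.mulRight ℂ y))
      (f₂ := (LinearMap.mulRight ℂ (basisStar b σ y)).comp (basisStar b σ)) hleft) x

theorem basisStar_mul_self_eq_zero [DecidableEq ι]
    (hmul : ∀ i j, b i * b j = ∑ m, (N i j m : ℂ) • b m)
    (hσ : Function.Involutive σ)
    (hτ : ∀ i j, (∑ m, (starRingEnd ℂ) (b.repr 1 m) * (N (σ i) j m : ℂ)) =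
      if i = j then (1 : ℂ) else 0)
    {x : A} (hx : basisStar b σ x * x = 0) : x = 0 := by
  let τ : A →ₗ[ℂ] ℂ := ∑ m, starRingEnd ℂ (b.repr 1 m) • b.coord m
  have hτbb : ∀ i j, τ (b (σ i) * b j) = if i = j then 1 else 0 := fun i j => by
    simp [τ, hmul, Finsupp.single_apply, ← hτ i j, mul_comm]
  have hτb : ∀ i y, τ (b (σ i) * y) = b.repr y i := fun i y => by
    conv_lhs => rw [← b.sum_repr y]
    simp only [Finset.mul_sum, mul_smul_comm, map_sum, map_smul, hτbb, smul_eq_mul, mul_ite,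
      mul_one, mul_zero, Finset.sum_ite_eq, Finset.mem_univ, if_true]
  have hstar : basisStar b σ x = ∑ i, starRingEnd ℂ (b.repr x i) • b (σ i) := by
    conv_lhs => rw [← b.sum_repr x]
    simp only [map_sum, map_smulₛₗ, basisStar_self b hσ]
  have hτx : τ (basisStar b σ x * x) = ∑ i, (Complex.normSq (b.repr x i) : ℂ) := by
    simp only [hstar, Finset.sum_mul, smul_mul_assoc, map_sum, map_smul, hτb, smul_eq_mul,
      Complex.normSq_eq_conj_mul_self]
  rw [hx, map_zero, eq_comm, ← Complex.ofReal_sum, Complex.ofReal_eq_zero,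
    Finset.sum_eq_zero_iff_of_nonneg fun i _ => Complex.normSq_nonneg _] at hτx
  exact b.ext_elem fun i => by simpa using hτx i (Finset.mem_univ i)

variable (σ) in
noncomputable abbrev basisStarRing (hmul : ∀ i j, b i * b j = ∑ m, (N i j m : ℂ) • b m)
    (hσ : Function.Involutive σ) (hσN : ∀ i j m, N (σ i) (σ j) m = N i j (σ m)) : StarRing A where
  star := basisStar b σ
  star_involutive := basisStar_basisStar b hσ
  star_mul x y := by rw [mul_comm]; exact basisStar_mul b hmul hσ hσN y x
  star_add := map_add _

theorem structConst_eq_zero_of_closed (hmul : ∀ i j, b i * b j = ∑ m, (N i j m : ℂ) • b m)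
    {B' : Finset ι}
    (hclosed : ∀ x ∈ Submodule.span ℤ (⇑b '' ↑B'), ∀ y ∈ Submodule.span ℤ (⇑b '' ↑B'),
      x * y ∈ Submodule.span ℤ (⇑b '' ↑B')) :
    ∀ i ∈ B', ∀ j ∈ B', ∀ m ∉ B', N i j m = 0 := by
  intro i hi j hj m hm
  have h := mul_mem_span_of_mul_mem_span_int hclosed (b.self_mem_span_image.mpr hi)
    (b.self_mem_span_image.mpr hj)
  rw [b.mem_span_image] at h
  exact_mod_cast (repr_basis_mul b hmul i j m).symm.trans
    (Finsupp.notMem_support_iff.mp fun hm' => hm (h hm'))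

theorem involution_mem_of_closed [DecidableEq ι]
    (hmul : ∀ i j, b i * b j = ∑ m, (N i j m : ℂ) • b m)
    (hσ : Function.Involutive σ) (hσN : ∀ i j m, N (σ i) (σ j) m = N i j (σ m))
    (hτ : ∀ i j, (∑ m, (starRingEnd ℂ) (b.repr 1 m) * (N (σ i) j m : ℂ)) =
      if i = j then (1 : ℂ) else 0)
    {B' : Finset ι}
    (hclosed : ∀ x ∈ Submodule.span ℤ (⇑b '' ↑B'), ∀ y ∈ Submodule.span ℤ (⇑b '' ↑B'),
      x * y ∈ Submodule.span ℤ (⇑b '' ↑B')) {i : ι} (hi : i ∈ B') : σ i ∈ B' := by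
  let _ := basisStarRing b σ hmul hσ hσN
  have : StarModule ℂ A := ⟨map_smulₛₗ (basisStar b σ)⟩
  have : FiniteDimensional ℂ A := Module.Finite.of_basis b
  let S := (Submodule.span ℂ (⇑b '' ↑B')).toNonUnitalSubalgebra
    fun _ _ => mul_mem_span_of_mul_mem_span_int hclosed
  have h : star (b i) ∈ S := S.star_mem_of_faithful
    (fun _ => basisStar_mul_self_eq_zero b hmul hσ hτ) (b.self_mem_span_image.mpr hi)
  rwa [show star (b i) = b (σ i) from basisStar_self b hσ i, Submodule.mem_toNonUnitalSubalgebra,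
    b.self_mem_span_image] at h

theorem sum_smul_mul_basis (hmul : ∀ i j, b i * b j = ∑ m, (N i j m : ℂ) • b m) (s : Finset ι)
    (c : ι → ℂ) (j : ι) : (∑ i ∈ s, c i • b i) * b j = ∑ m, (∑ i ∈ s, c i * N i j m) • b m := by
  simp only [Finset.sum_mul, smul_mul_assoc, hmul, Finset.smul_sum, smul_smul, Finset.sum_smul]
  exact Finset.sum_comm

end BasisAlgebra

/-- Let `(R,B)` be a `ℤ`-based rng and `B' ⊆ B` a closed
subset.  Then `e' := ∑_{i ∈ B'} e_i • b i` is an identity for the `ℂ`-span of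
`B'`; consequently the subring spanned by `B'`, with the restrictions of `~`
and `τ`, is itself a `ℤ`-based rng. -/
theorem zBasedRng_closed_subset_is_zBasedRng
    {n : ℕ} (A : Type*) [CommRing A] [Algebra ℂ A]
    (b : Module.Basis (Fin n) ℂ A) (N : Fin n → Fin n → Fin n → ℤ) (σ : Fin n → Fin n)
    (hmul : ∀ i j, b i * b j = ∑ m, (N i j m : ℂ) • b m)
    (hσ : ∀ i, σ (σ i) = i)
    (hσN : ∀ i j m, N (σ i) (σ j) m = N i j (σ m))
    (hτ : ∀ i j, (∑ m, (starRingEnd ℂ) (b.repr 1 m) * (N (σ i) j m : ℂ)) =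
      if i = j then (1 : ℂ) else 0)
    (he : ∀ j, (starRingEnd ℂ) (b.repr 1 (σ j)) = b.repr 1 j)
    (B' : Finset (Fin n))
    (hclosed : ∀ x ∈ Submodule.span ℤ (⇑b '' ↑B'), ∀ y ∈ Submodule.span ℤ (⇑b '' ↑B'),
      x * y ∈ Submodule.span ℤ (⇑b '' ↑B')) :
    (∀ r ∈ Submodule.span ℂ (⇑b '' ↑B'), (∑ i ∈ B', b.repr 1 i • b i) * r = r) ∧
    ∃ σ' : {x // x ∈ B'} → {x // x ∈ B'},
      (∀ i : {x // x ∈ B'}, (σ' i : Fin n) = σ (i : Fin n)) ∧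
      IsZBasedRngData (fun i j m : {x // x ∈ B'} => N i.1 j.1 m.1)
        (fun i : {x // x ∈ B'} => b.repr 1 i.1) σ' := by
  have hdata := isZBasedRngData_of_basis b hmul hσ hσN hτ he
  have hN := structConst_eq_zero_of_closed b hmul hclosed
  have hσB' : ∀ i ∈ B', σ i ∈ B' := fun i hi => involution_mem_of_closed b hmul hσ hσN hτ hclosed hi
  refine ⟨fun r hr => ?_, _, fun _ => rfl, hdata.restrict hN hσB'⟩
  refine LinearMap.eqOn_span (f := LinearMap.mulLeft ℂ _) (g := LinearMap.id) ?_ hr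
  rintro _ ⟨j, hj, rfl⟩
  simp [sum_smul_mul_basis b hmul, hdata.sum_mul_structConst_of_mem hN hσB' hj]
end

section
/- Let s be a Hadamard matrix of order 4k (k > 1) with s_{i,1} = 1 for all i. Then for all column indices i, j, m, the sum Σ_{l=1}^{4k} s_{li} s_{lj} s_{lm} is divisible by 4. Consequently the ℤ-lattice spanned by the columns b_1,…,b_{4k} of k·s is closed under componentwise multiplication, with b_i b_j = Σ_m N_{ij}^m b_m, where N_{ij}^m = (1/4) Σ_{l=1}^{4k} s_{li} s_{lj} s_{lm} ∈ ℤ. -/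
open scoped BigOperators

/-- Let `s` be a Hadamard matrix of order `4k` (`k > 1`)
normalized so that its first column (index `⟨0, _⟩`) is all ones.  Then every
sum `∑ l, s l i * s l j * s l m` is divisible by `4`, and consequently the
`ℤ`-lattice spanned by the columns `b_i = k • (i-th column of s)` of `k·s` is
closed under componentwise multiplication, with
`b_i b_j = ∑ m N_{ij}^m b_m` where `N_{ij}^m = (1/4) ∑ l, s l i * s l j * s l m`. -/
theorem hadamard_lattice_closed_under_mul
    (k : ℕ) (hk : 1 < k)
    (s : Matrix (Fin (4 * k)) (Fin (4 * k)) ℤ)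
    (hpm : ∀ i j, s i j = 1 ∨ s i j = -1)
    (hH : s * s.transpose = (4 * (k : ℤ)) • 1)
    (h1 : ∀ i, s i ⟨0, by omega⟩ = 1) :
    (∀ i j m, (4 : ℤ) ∣ ∑ l, s l i * s l j * s l m) ∧
    (∀ i j x, ((k : ℤ) * s x i) * ((k : ℤ) * s x j) =
      ∑ m, ((∑ l, s l i * s l j * s l m) / 4) * ((k : ℤ) * s x m)) := by
  -- row orthogonality
  have hrow : ∀ l x : Fin (4 * k), ∑ m, s l m * s x m = if l = x then 4 * (k : ℤ) else 0 := by
    intro l x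
    have := congrFun (congrFun hH l) x
    simpa [Matrix.mul_apply, Matrix.transpose_apply, Matrix.smul_apply, Matrix.one_apply]
      using this
  -- column orthogonality via ℚ
  have hcol : ∀ p q : Fin (4 * k), ∑ l, s l p * s l q = if p = q then 4 * (k : ℤ) else 0 := by
    have hk0 : (4 * (k : ℚ)) ≠ 0 := by positivity
    set S : Matrix (Fin (4 * k)) (Fin (4 * k)) ℚ := s.map (Int.cast) with hS
    have hHQ : S * S.transpose = (4 * (k : ℚ)) • 1 := by
      ext a b
      have h := congrFun (congrFun hH a) b
      simp only [Matrix.mul_apply, Matrix.transpose_apply, Matrix.smul_apply, Matrix.one_apply,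
        smul_eq_mul, mul_ite, mul_one, mul_zero] at h
      simp only [hS, Matrix.mul_apply, Matrix.transpose_apply, Matrix.map_apply,
        Matrix.smul_apply, Matrix.one_apply, smul_eq_mul, mul_ite, mul_one, mul_zero]
      rw [show (if a = b then 4 * (k : ℚ) else 0) = ((if a = b then 4 * (k : ℤ) else 0 : ℤ) : ℚ) by
        split <;> push_cast <;> ring, ← h]
      push_cast
      ring
    have h1' : S * ((4 * (k : ℚ))⁻¹ • S.transpose) = 1 := by
      rw [Matrix.mul_smul, hHQ, smul_smul, inv_mul_cancel₀ hk0, one_smul]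
    have h2' : ((4 * (k : ℚ))⁻¹ • S.transpose) * S = 1 := (mul_eq_one_comm).mp h1'
    have h3' : S.transpose * S = (4 * (k : ℚ)) • 1 := by
      rw [Matrix.smul_mul] at h2'
      calc S.transpose * S = (4 * (k : ℚ)) • ((4 * (k : ℚ))⁻¹ • (S.transpose * S)) := by
            rw [smul_smul, mul_inv_cancel₀ hk0, one_smul]
        _ = (4 * (k : ℚ)) • 1 := by rw [h2']
    intro p q
    have h := congrFun (congrFun h3' p) q
    simp only [Matrix.mul_apply, Matrix.transpose_apply, Matrix.smul_apply, Matrix.one_apply,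
      hS, Matrix.map_apply, smul_eq_mul, mul_ite, mul_one, mul_zero] at h
    have hq : ((∑ l, s l p * s l q : ℤ) : ℚ) = ((if p = q then 4 * (k : ℤ) else 0 : ℤ) : ℚ) := by
      rw [show ((if p = q then 4 * (k : ℤ) else 0 : ℤ) : ℚ) = (if p = q then 4 * (k : ℚ) else 0) by
        split <;> push_cast <;> ring, ← h]
      push_cast
      ring
    exact_mod_cast hq
  have hifdvd : ∀ p q, (4 : ℤ) ∣ ∑ l, s l p * s l q := by
    intro p q; rw [hcol]; split
    · exact ⟨(k : ℤ), rfl⟩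
    · exact dvd_zero 4
  have hsingle : ∀ p, (4 : ℤ) ∣ ∑ l, s l p := by
    intro p
    have := hifdvd p ⟨0, by omega⟩
    simpa [h1] using this
  have hdvd : ∀ i j m, (4 : ℤ) ∣ ∑ l, s l i * s l j * s l m := by
    intro i j m
    have hsum8 : (4 : ℤ) ∣ ∑ l, (1 + s l i) * (1 + s l j) * (1 + s l m) := by
      refine Finset.dvd_sum fun l _ => ?_
      rcases hpm l i with h | h <;> rcases hpm l j with h' | h'
      · exact ⟨1 + s l m, by rw [h, h']; ring⟩
      · exact ⟨0, by rw [h']; ring⟩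
      · exact ⟨0, by rw [h]; ring⟩
      · exact ⟨0, by rw [h]; ring⟩
    have hcard : (∑ _l : Fin (4 * k), (1 : ℤ)) = 4 * (k : ℤ) := by
      simp [Finset.card_univ]
    have expand : ∑ l, (1 + s l i) * (1 + s l j) * (1 + s l m)
        = (∑ _l : Fin (4 * k), (1 : ℤ)) + (∑ l, s l i) + (∑ l, s l j) + (∑ l, s l m)
          + (∑ l, s l i * s l j) + (∑ l, s l i * s l m) + (∑ l, s l j * s l m)
          + (∑ l, s l i * s l j * s l m) := by
      rw [← Finset.sum_add_distrib, ← Finset.sum_add_distrib, ← Finset.sum_add_distrib,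
        ← Finset.sum_add_distrib, ← Finset.sum_add_distrib, ← Finset.sum_add_distrib,
        ← Finset.sum_add_distrib]
      exact Finset.sum_congr rfl fun l _ => by ring
    have hc4 : (4 : ℤ) ∣ (∑ _l : Fin (4 * k), (1 : ℤ)) := by
      rw [hcard]; exact ⟨(k : ℤ), rfl⟩
    have : ∑ l, s l i * s l j * s l m
        = (∑ l, (1 + s l i) * (1 + s l j) * (1 + s l m))
          - (∑ _l : Fin (4 * k), (1 : ℤ)) - (∑ l, s l i) - (∑ l, s l j) - (∑ l, s l m)
          - (∑ l, s l i * s l j) - (∑ l, s l i * s l m) - (∑ l, s l j * s l m) := by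
      rw [expand]; ring
    rw [this]
    exact dvd_sub (dvd_sub (dvd_sub (dvd_sub (dvd_sub (dvd_sub (dvd_sub hsum8 hc4)
      (hsingle i)) (hsingle j)) (hsingle m)) (hifdvd i j)) (hifdvd i m)) (hifdvd j m)
  refine ⟨hdvd, fun i j x => ?_⟩
  have key : ∑ m, (∑ l, s l i * s l j * s l m) * ((k : ℤ) * s x m)
      = 4 * (((k : ℤ) * s x i) * ((k : ℤ) * s x j)) := by
    calc ∑ m, (∑ l, s l i * s l j * s l m) * ((k : ℤ) * s x m)
        = ∑ m, ∑ l, s l i * s l j * s l m * ((k : ℤ) * s x m) := by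
          exact Finset.sum_congr rfl fun m _ => by rw [Finset.sum_mul]
      _ = ∑ l, ∑ m, s l i * s l j * s l m * ((k : ℤ) * s x m) := Finset.sum_comm
      _ = ∑ l, (k : ℤ) * (s l i * s l j) * (∑ m, s l m * s x m) := by
          refine Finset.sum_congr rfl fun l _ => ?_
          rw [Finset.mul_sum]
          exact Finset.sum_congr rfl fun m _ => by ring
      _ = ∑ l, (k : ℤ) * (s l i * s l j) * (if l = x then 4 * (k : ℤ) else 0) := by
          exact Finset.sum_congr rfl fun l _ => by rw [hrow]
      _ = (k : ℤ) * (s x i * s x j) * (4 * (k : ℤ)) := by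
          simp only [mul_ite, mul_zero]
          rw [Finset.sum_ite_eq' Finset.univ x
            (fun l => (k : ℤ) * (s l i * s l j) * (4 * (k : ℤ)))]
          simp
      _ = 4 * (((k : ℤ) * s x i) * ((k : ℤ) * s x j)) := by ring
  have h4eq : 4 * ∑ m, ((∑ l, s l i * s l j * s l m) / 4) * ((k : ℤ) * s x m)
      = ∑ m, (∑ l, s l i * s l j * s l m) * ((k : ℤ) * s x m) := by
    rw [Finset.mul_sum]
    refine Finset.sum_congr rfl fun m _ => ?_
    rw [← mul_assoc, Int.mul_ediv_cancel' (hdvd i j m)]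
  linarith [key, h4eq]
end

section
/- Let s be a Hadamard matrix of order 4k (k > 1) with s_{i,1} = 1 for all i, fix a column index i ≠ 1, and let N̂_i be the (4k−2)×(4k−2) matrix with rows and columns indexed by the column indices j, m ∉ {1, i} and entries (N̂_i)_{j,m} = N_{ij}^m := (1/4) Σ_{l=1}^{4k} s_{li} s_{lj} s_{lm}. Then N̂_i has integer entries and zero diagonal, (N̂_i)_{j,j} = 0; when k is odd its zeroes are exactly its diagonal entries, i.e. (N̂_i)_{j,m} ≠ 0 for j ≠ m; and N̂_i · N̂_iᵀ = k²·I. -/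
open scoped BigOperators

/-- The matrix `N̂_i`: rows and columns indexed by the column indices
different from `z` (the index of the all-ones column) and from `i`, with
entries the structure constants `N_{ij}^m = (1/4) ∑ l, s l i * s l j * s l m`. -/
def hadamardNhat {n : ℕ} (s : Matrix (Fin n) (Fin n) ℤ) (z i : Fin n) :
    Matrix {x : Fin n // x ≠ z ∧ x ≠ i} {x : Fin n // x ≠ z ∧ x ≠ i} ℤ :=
  fun j m => (∑ l, s l i * s l j.1 * s l m.1) / 4

/-- Let `s` be a Hadamard matrix of order `4k` (`k > 1`)
whose column `z` (the first column) is all ones, and fix a column index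
`i ≠ z`.  Then `N̂_i` has integer entries (the defining sums are divisible
by `4`), has zeroes exactly on its diagonal (off-diagonal entries being
nonzero when `k` is odd), and satisfies `N̂_i ⬝ N̂_iᵀ = k² I`. -/
theorem hadamard_Nhat_conference
    (k : ℕ) (hk : 1 < k)
    (s : Matrix (Fin (4 * k)) (Fin (4 * k)) ℤ)
    (hpm : ∀ i j, s i j = 1 ∨ s i j = -1)
    (hH : s * s.transpose = (4 * (k : ℤ)) • 1)
    (z : Fin (4 * k)) (hz : (z : ℕ) = 0)
    (h1 : ∀ i, s i z = 1)
    (i : Fin (4 * k)) (hi : i ≠ z) :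
    (∀ j m : {x : Fin (4 * k) // x ≠ z ∧ x ≠ i},
        (4 : ℤ) ∣ ∑ l, s l i * s l j.1 * s l m.1) ∧
    (∀ j : {x : Fin (4 * k) // x ≠ z ∧ x ≠ i}, hadamardNhat s z i j j = 0) ∧
    (Odd k → ∀ j m : {x : Fin (4 * k) // x ≠ z ∧ x ≠ i},
        j ≠ m → hadamardNhat s z i j m ≠ 0) ∧
    hadamardNhat s z i * (hadamardNhat s z i).transpose = ((k : ℤ) ^ 2) • 1 := by
  have hsq : ∀ l p : Fin (4 * k), s l p * s l p = 1 := by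
    intro l p; rcases hpm l p with h | h <;> rw [h] <;> norm_num
  -- row orthogonality
  have hrow : ∀ l l' : Fin (4 * k), (∑ p, s l p * s l' p) =
      if l = l' then (4 * (k : ℤ)) else 0 := by
    intro l l'
    have := congrFun (congrFun hH l) l'
    simpa [Matrix.mul_apply, Matrix.transpose_apply, Matrix.smul_apply,
      Matrix.one_apply, mul_ite, mul_one, mul_zero] using this
  -- column orthogonality, via ℚ
  have hcol : ∀ a b : Fin (4 * k), (∑ l, s l a * s l b) =
      if a = b then (4 * (k : ℤ)) else 0 := by
    set S : Matrix (Fin (4 * k)) (Fin (4 * k)) ℚ := s.map (Int.cast) with hSdef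
    have hc : (4 * (k : ℚ)) ≠ 0 := by positivity
    have hS : S * S.transpose = (4 * (k : ℚ)) • 1 := by
      ext a b
      have h := hrow a b
      have : ((∑ p, s a p * s b p : ℤ) : ℚ) =
          ((if a = b then (4 * (k : ℤ)) else 0 : ℤ) : ℚ) := congrArg _ h
      simp only [Matrix.mul_apply, Matrix.transpose_apply, hSdef, Matrix.map_apply,
        Matrix.smul_apply, Matrix.one_apply, smul_eq_mul]
      push_cast at this
      rw [this]
      split <;> simp
    have h1' : S * ((4 * (k : ℚ))⁻¹ • S.transpose) = 1 := by
      rw [Matrix.mul_smul, hS, smul_smul, inv_mul_cancel₀ hc, one_smul]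
    have h2' : ((4 * (k : ℚ))⁻¹ • S.transpose) * S = 1 := mul_eq_one_comm.mp h1'
    have h3' : S.transpose * S = (4 * (k : ℚ)) • 1 := by
      calc S.transpose * S = (4 * (k : ℚ)) • (((4 * (k : ℚ))⁻¹ • S.transpose) * S) := by
            rw [Matrix.smul_mul, smul_smul, mul_inv_cancel₀ hc, one_smul]
        _ = (4 * (k : ℚ)) • 1 := by rw [h2']
    intro a b
    have := congrFun (congrFun h3' a) b
    simp only [Matrix.mul_apply, Matrix.transpose_apply, hSdef, Matrix.map_apply,
      Matrix.smul_apply, Matrix.one_apply, smul_eq_mul] at this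
    by_cases hab : a = b <;> simp only [hab, if_true, if_false, mul_one, mul_zero] at this ⊢ <;>
      exact_mod_cast this
  -- column sums (against the all-ones column) vanish
  have hone : ∀ a : Fin (4 * k), a ≠ z → (∑ l, s l a) = 0 := by
    intro a ha
    have h := hcol a z
    simp only [h1, mul_one, ha, if_false] at h
    exact h
  -- pairwise column products vanish
  have hpair : ∀ a b : Fin (4 * k), a ≠ b → (∑ l, s l a * s l b) = 0 := by
    intro a b hab
    have h := hcol a b
    simpa [hab] using h
  -- diagonal sums vanish
  have hdiagA : ∀ j : Fin (4 * k), (∑ l, s l i * s l j * s l j) = 0 := by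
    intro j
    have h : ∀ l ∈ Finset.univ, s l i * s l j * s l j = s l i := by
      intro l _; rw [mul_assoc, hsq, mul_one]
    rw [Finset.sum_congr rfl h]
    exact hone i hi
  -- the key structure: for j ≠ m, the sum is 8t - 4k
  have key : ∀ j m : {x : Fin (4 * k) // x ≠ z ∧ x ≠ i}, j.1 ≠ m.1 →
      ∃ t : ℤ, (∑ l, s l i * s l j.1 * s l m.1) = 8 * t - 4 * (k : ℤ) := by
    intro j m hjm
    have hij : i ≠ j.1 := Ne.symm j.2.2
    have him : i ≠ m.1 := Ne.symm m.2.2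
    have h8 : (8 : ℤ) ∣ ∑ l, (1 + s l i) * (1 + s l j.1) * (1 + s l m.1) := by
      apply Finset.dvd_sum
      intro l _
      rcases hpm l i with ha | ha <;> rcases hpm l j.1 with hb | hb <;>
        rcases hpm l m.1 with hc | hc <;> rw [ha, hb, hc] <;> norm_num
    have hsplit : (∑ l, (1 + s l i) * (1 + s l j.1) * (1 + s l m.1)) =
        4 * (k : ℤ) + ∑ l, s l i * s l j.1 * s l m.1 := by
      have expand : ∀ l ∈ Finset.univ, (1 + s l i) * (1 + s l j.1) * (1 + s l m.1) =
          1 + s l i + s l j.1 + s l m.1 + s l i * s l j.1 + s l i * s l m.1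
            + s l j.1 * s l m.1 + s l i * s l j.1 * s l m.1 := by
        intro l _; ring
      rw [Finset.sum_congr rfl expand]
      simp only [Finset.sum_add_distrib, Finset.sum_const, Finset.card_univ,
        Fintype.card_fin, nsmul_eq_mul, mul_one]
      rw [hone i hi, hone j.1 j.2.1, hone m.1 m.2.1, hpair i j.1 hij, hpair i m.1 him,
        hpair j.1 m.1 hjm]
      push_cast; ring
    obtain ⟨t, ht⟩ := h8
    exact ⟨t, by linarith [hsplit, ht]⟩
  -- divisibility
  have hdvd : ∀ j m : {x : Fin (4 * k) // x ≠ z ∧ x ≠ i},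
      (4 : ℤ) ∣ ∑ l, s l i * s l j.1 * s l m.1 := by
    intro j m
    by_cases hjm : j.1 = m.1
    · rw [hjm, hdiagA]
      exact dvd_zero _
    · obtain ⟨t, ht⟩ := key j m hjm
      exact ⟨2 * t - k, by rw [ht]; ring⟩
  -- the sum with last column z or i vanishes
  have hAz : ∀ j : {x : Fin (4 * k) // x ≠ z ∧ x ≠ i},
      (∑ l, s l i * s l j.1 * s l z) = 0 := by
    intro j
    have h : ∀ l ∈ Finset.univ, s l i * s l j.1 * s l z = s l i * s l j.1 := by
      intro l _; rw [h1, mul_one]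
    rw [Finset.sum_congr rfl h]
    exact hpair i j.1 (Ne.symm j.2.2)
  have hAi : ∀ j : {x : Fin (4 * k) // x ≠ z ∧ x ≠ i},
      (∑ l, s l i * s l j.1 * s l i) = 0 := by
    intro j
    have h : ∀ l ∈ Finset.univ, s l i * s l j.1 * s l i = s l j.1 := by
      intro l _
      calc s l i * s l j.1 * s l i = s l i * s l i * s l j.1 := by ring
        _ = s l j.1 := by rw [hsq, one_mul]
    rw [Finset.sum_congr rfl h]
    exact hone j.1 j.2.1
  refine ⟨hdvd, ?_, ?_, ?_⟩
  · -- diagonal zero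
    intro j
    simp [hadamardNhat, hdiagA]
  · -- off-diagonal nonzero for odd k
    intro hodd j m hjm
    have hjm' : j.1 ≠ m.1 := fun h => hjm (Subtype.ext h)
    obtain ⟨t, ht⟩ := key j m hjm'
    have hval : hadamardNhat s z i j m = 2 * t - (k : ℤ) := by
      unfold hadamardNhat
      rw [ht, show (8 : ℤ) * t - 4 * (k : ℤ) = 4 * (2 * t - (k : ℤ)) by ring,
        Int.mul_ediv_cancel_left _ (by norm_num)]
    rw [hval]
    obtain ⟨r, hr⟩ := hodd
    intro h0
    omega
  · -- the product
    ext j m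
    rw [Matrix.mul_apply]
    simp only [Matrix.transpose_apply, Matrix.smul_apply, Matrix.one_apply, smul_eq_mul]
    -- full sum over all columns
    have hAA : (∑ p : Fin (4 * k), (∑ l, s l i * s l j.1 * s l p) *
        (∑ l, s l i * s l m.1 * s l p)) =
        if j.1 = m.1 then 16 * (k : ℤ) ^ 2 else 0 := by
      have step1 : (∑ p : Fin (4 * k), (∑ l, s l i * s l j.1 * s l p) *
          (∑ l, s l i * s l m.1 * s l p)) =
          ∑ l, ∑ l', ∑ p, (s l i * s l j.1 * s l p) * (s l' i * s l' m.1 * s l' p) := by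
        have tri : ∀ F : Fin (4 * k) → Fin (4 * k) → Fin (4 * k) → ℤ,
            (∑ p, ∑ l', ∑ l, F l l' p) = ∑ l, ∑ l', ∑ p, F l l' p := by
          intro F
          calc (∑ p, ∑ l', ∑ l, F l l' p)
              = ∑ p, ∑ l, ∑ l', F l l' p :=
                Finset.sum_congr rfl (fun p _ => Finset.sum_comm)
            _ = ∑ l, ∑ p, ∑ l', F l l' p := Finset.sum_comm
            _ = ∑ l, ∑ l', ∑ p, F l l' p :=
                Finset.sum_congr rfl (fun l _ => Finset.sum_comm)
        simp only [Finset.sum_mul, Finset.mul_sum]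
        exact tri fun l l' p => (s l i * s l j.1 * s l p) * (s l' i * s l' m.1 * s l' p)
      rw [step1]
      have step2 : ∀ l l' : Fin (4 * k),
          (∑ p, (s l i * s l j.1 * s l p) * (s l' i * s l' m.1 * s l' p)) =
          (s l i * s l j.1) * (s l' i * s l' m.1) * ∑ p, s l p * s l' p := by
        intro l l'
        rw [Finset.mul_sum]
        apply Finset.sum_congr rfl
        intro p _; ring
      have step3 : (∑ l, ∑ l' : Fin (4 * k), ∑ p, (s l i * s l j.1 * s l p) *
          (s l' i * s l' m.1 * s l' p)) =
          ∑ l, (s l i * s l j.1) * (s l i * s l m.1) * (4 * (k : ℤ)) := by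
        apply Finset.sum_congr rfl
        intro l _
        calc (∑ l', ∑ p, (s l i * s l j.1 * s l p) * (s l' i * s l' m.1 * s l' p))
            = ∑ l', (s l i * s l j.1) * (s l' i * s l' m.1) * (∑ p, s l p * s l' p) := by
              exact Finset.sum_congr rfl fun l' _ => step2 l l'
          _ = ∑ l', if l = l' then (s l i * s l j.1) * (s l' i * s l' m.1) * (4 * (k : ℤ))
                else 0 := by
              apply Finset.sum_congr rfl
              intro l' _
              rw [hrow]
              split <;> simp
          _ = (s l i * s l j.1) * (s l i * s l m.1) * (4 * (k : ℤ)) := by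
              rw [Finset.sum_ite_eq]
              simp
      rw [step3]
      have step4 : (∑ l, (s l i * s l j.1) * (s l i * s l m.1) * (4 * (k : ℤ))) =
          (4 * (k : ℤ)) * ∑ l, s l j.1 * s l m.1 := by
        rw [Finset.mul_sum]
        apply Finset.sum_congr rfl
        intro l _
        calc (s l i * s l j.1) * (s l i * s l m.1) * (4 * (k : ℤ))
            = (s l i * s l i) * ((s l j.1 * s l m.1) * (4 * (k : ℤ))) := by ring
          _ = (4 * (k : ℤ)) * (s l j.1 * s l m.1) := by rw [hsq]; ring
      rw [step4, hcol]
      split <;> ring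
    -- restrict to the subtype
    have hsub : (∑ p : {x : Fin (4 * k) // x ≠ z ∧ x ≠ i},
        (∑ l, s l i * s l j.1 * s l p.1) * (∑ l, s l i * s l m.1 * s l p.1)) =
        if j.1 = m.1 then 16 * (k : ℤ) ^ 2 else 0 := by
      rw [← hAA]
      rw [← Finset.sum_subtype (Finset.univ.filter (fun x => x ≠ z ∧ x ≠ i))
        (by simp) (fun p => (∑ l, s l i * s l j.1 * s l p) * (∑ l, s l i * s l m.1 * s l p))]
      rw [← Finset.sum_filter_add_sum_filter_not Finset.univ (fun x => x ≠ z ∧ x ≠ i)]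
      have hzero : (∑ p ∈ Finset.univ.filter (fun x => ¬(x ≠ z ∧ x ≠ i)),
          (∑ l, s l i * s l j.1 * s l p) * (∑ l, s l i * s l m.1 * s l p)) = 0 := by
        apply Finset.sum_eq_zero
        intro p hp
        simp only [Finset.mem_filter, Finset.mem_univ, true_and, not_and_or, not_not] at hp
        rcases hp with h | h <;> rw [h]
        · rw [hAz j, zero_mul]
        · rw [hAi j, zero_mul]
      rw [hzero, add_zero]
    -- finish: cancel the factor 16
    have h16 : (16 : ℤ) * (∑ p : {x : Fin (4 * k) // x ≠ z ∧ x ≠ i},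
        hadamardNhat s z i j p * hadamardNhat s z i m p) =
        16 * ((k : ℤ) ^ 2 * if j = m then 1 else 0) := by
      rw [Finset.mul_sum]
      have hterm : ∀ p : {x : Fin (4 * k) // x ≠ z ∧ x ≠ i},
          16 * (hadamardNhat s z i j p * hadamardNhat s z i m p) =
          (∑ l, s l i * s l j.1 * s l p.1) * (∑ l, s l i * s l m.1 * s l p.1) := by
        intro p
        unfold hadamardNhat
        calc 16 * ((∑ l, s l i * s l j.1 * s l p.1) / 4 *
              ((∑ l, s l i * s l m.1 * s l p.1) / 4))
            = (4 * ((∑ l, s l i * s l j.1 * s l p.1) / 4)) *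
              (4 * ((∑ l, s l i * s l m.1 * s l p.1) / 4)) := by ring
          _ = (∑ l, s l i * s l j.1 * s l p.1) * (∑ l, s l i * s l m.1 * s l p.1) := by
              rw [Int.mul_ediv_cancel' (hdvd j p), Int.mul_ediv_cancel' (hdvd m p)]
      rw [Finset.sum_congr rfl (fun p _ => hterm p), hsub]
      by_cases hjm : j = m
      · simp [hjm]
      · have : j.1 ≠ m.1 := fun h => hjm (Subtype.ext h)
        simp [hjm, this]
    exact mul_left_cancel₀ (by norm_num : (16 : ℤ) ≠ 0) h16
end

section
/- Let s be a Hadamard matrix of order 4k (k > 1) with s_{i,1} = 1 for all i, fix a column index i ≠ 1, and let N̂_i be the (4k−2)×(4k−2) matrix with rows and columns indexed by the column indices j, m ∉ {1, i} and entries (N̂_i)_{j,m} = N_{ij}^m := (1/4) Σ_{l=1}^{4k} s_{li} s_{lj} s_{lm}. Then the (8k−4)×(8k−4) block matrix W_i := [[N̂_i + I, N̂_i − I], [N̂_i − I, −N̂_i − I]] satisfies W_i · W_iᵀ = (2k² + 2)·I. -/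
open scoped BigOperators

/-!
With `D` the diagonal matrix of the column `i`, the numbers `4 N_{ij}^m` are the entries of
`T = sᵀ D s`, and `T² = sᵀ D (s sᵀ) D s = 16 k² I` because `D² = I`. By column orthogonality
(against the all-ones column `z` and against `i`), a row of `T` indexed by `j ∉ {z, i}` vanishes
in the columns `z` and `i`, so the square of the block `4 N̂_i` of `T` is still `16 k² I`.
The entries of `T` in that block are divisible by `4`, hence `N̂_i² = k² I`, and as `N̂_i` is
symmetric the identity for `W_i W_iᵀ` is a computation in the ring of matrices.
-/

namespace Matrix

variable {n R : Type*} [Fintype n] [DecidableEq n] [CommRing R]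

theorem fromBlocks_mul_transpose_eq_smul_one {N : Matrix n n R} {a : R}
    (hN : N * N = a • 1) (hNt : Nᵀ = N) :
    fromBlocks (N + 1) (N - 1) (N - 1) (-N - 1) *
        (fromBlocks (N + 1) (N - 1) (N - 1) (-N - 1))ᵀ = (2 * a + 2) • 1 := by
  have hdiag₁ : (N + 1) * (N + 1) + (N - 1) * (N - 1) = (2 * a + 2) • 1 := by
    rw [add_smul, mul_smul, two_smul, two_smul, ← hN]; noncomm_ring
  have hdiag₂ : (N - 1) * (N - 1) + (-N - 1) * (-N - 1) = (2 * a + 2) • 1 := by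
    rw [add_smul, mul_smul, two_smul, two_smul, ← hN]; noncomm_ring
  have hoff₁ : (N + 1) * (N - 1) + (N - 1) * (-N - 1) = 0 := by noncomm_ring
  have hoff₂ : (N - 1) * (N + 1) + (-N - 1) * (N - 1) = 0 := by noncomm_ring
  simp only [fromBlocks_transpose, transpose_add, transpose_sub, transpose_neg, transpose_one,
    hNt, fromBlocks_multiply, hdiag₁, hdiag₂, hoff₁, hoff₂]
  rw [← fromBlocks_one, fromBlocks_smul, smul_zero]

theorem transpose_mul_mul_sq_eq_smul_one {A D : Matrix n n R} {c : R}
    (hAAt : A * Aᵀ = c • 1) (hAtA : Aᵀ * A = c • 1) (hD : D * D = 1) :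
    (Aᵀ * D * A) * (Aᵀ * D * A) = c ^ 2 • 1 := by
  calc (Aᵀ * D * A) * (Aᵀ * D * A) = Aᵀ * D * (A * Aᵀ) * D * A := by
        simp only [Matrix.mul_assoc]
    _ = c • (Aᵀ * (D * D) * A) := by
        rw [hAAt, Matrix.mul_smul, Matrix.mul_one, Matrix.smul_mul, Matrix.smul_mul]
        simp only [Matrix.mul_assoc]
    _ = c ^ 2 • 1 := by rw [hD, Matrix.mul_one, hAtA, smul_smul, sq]

def colTripleSum (A : Matrix n n R) (i : n) : Matrix n n R :=
  Aᵀ * diagonal (fun l => A l i) * A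

theorem colTripleSum_apply (A : Matrix n n R) (i j m : n) :
    colTripleSum A i j m = ∑ l, A l i * A l j * A l m := by
  rw [colTripleSum, mul_apply]
  simp only [mul_diagonal, transpose_apply]
  exact Finset.sum_congr rfl fun l _ => by ring

namespace IsHadamard

variable {A : Matrix n n ℤ} (hA : A.IsHadamard)
include hA

theorem apply_eq_one_or_neg_one (l j : n) : A l j = 1 ∨ A l j = -1 :=
  Unitary.mem_iff_eq_one_or_eq_neg_one.mp (hA.apply_mem l j)

theorem sum_mul_eq_zero {j m : n} (hjm : j ≠ m) : ∑ l, A l j * A l m = 0 := by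
  simpa [mul_apply, hjm, conjTranspose_eq_transpose_of_trivial] using
    congr_fun (congr_fun hA.conjTranspose_mul j) m

theorem sum_eq_zero_of_apply_eq_one {z : n} (hz : ∀ l, A l z = 1) {j : n} (hj : j ≠ z) :
    ∑ l, A l j = 0 := by
  simpa [hz] using hA.sum_mul_eq_zero hj

theorem colTripleSum_mul_self (i : n) :
    colTripleSum A i * colTripleSum A i = (Fintype.card n : ℤ) ^ 2 • 1 := by
  refine transpose_mul_mul_sq_eq_smul_one ?_ ?_ ?_
  · simpa [conjTranspose_eq_transpose_of_trivial] using hA.mul_conjTranspose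
  · simpa [conjTranspose_eq_transpose_of_trivial] using hA.conjTranspose_mul
  · rw [diagonal_mul_diagonal, ← diagonal_one]
    congr 1; funext l
    rcases hA.apply_eq_one_or_neg_one l i with h | h <;> simp [h]

theorem colTripleSum_apply_eq_zero_of_apply_eq_one {z : n} (hz : ∀ l, A l z = 1)
    {i j : n} (hji : j ≠ i) : colTripleSum A i j z = 0 := by
  rw [colTripleSum_apply, ← hA.sum_mul_eq_zero hji]
  exact Finset.sum_congr rfl fun l _ => by rw [hz, mul_one, mul_comm]

theorem colTripleSum_apply_self_eq_zero {z : n} (hz : ∀ l, A l z = 1)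
    (i : n) {j : n} (hj : j ≠ z) : colTripleSum A i j i = 0 := by
  rw [colTripleSum_apply, ← hA.sum_eq_zero_of_apply_eq_one hz hj]
  refine Finset.sum_congr rfl fun l _ => ?_
  rcases hA.apply_eq_one_or_neg_one l i with h | h <;> rw [h] <;> ring

-- `(1 + a)(1 + b)(1 + c) ∈ {0, 8}` for signs `a, b, c`; summing its expansion over the rows
-- leaves `card n + ∑ l, A l i * A l j * A l m`, as orthogonality kills all other terms.
theorem four_dvd_colTripleSum_apply (h4 : 4 ∣ Fintype.card n) {z : n} (hz : ∀ l, A l z = 1)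
    {i j m : n} (hi : i ≠ z) (hj : j ≠ z) (hm : m ≠ z) (hji : j ≠ i) (hmi : m ≠ i) :
    4 ∣ colTripleSum A i j m := by
  rw [colTripleSum_apply]
  by_cases hjm : j = m
  · subst hjm
    have hsq : ∑ l, A l i * A l j * A l j = ∑ l, A l i := Finset.sum_congr rfl fun l _ => by
      rcases hA.apply_eq_one_or_neg_one l j with h | h <;> rw [h] <;> ring
    rw [hsq, hA.sum_eq_zero_of_apply_eq_one hz hi]
    exact dvd_zero 4
  have two_dvd (l a : n) : (2 : ℤ) ∣ 1 + A l a := by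
    rcases hA.apply_eq_one_or_neg_one l a with h | h <;> rw [h] <;> norm_num
  have hprod : 4 ∣ ∑ l, (1 + A l i) * (1 + A l j) * (1 + A l m) :=
    Finset.dvd_sum fun l _ => (mul_dvd_mul (two_dvd l i) (two_dvd l j)).mul_right _
  have hexpand : ∑ l, (1 + A l i) * (1 + A l j) * (1 + A l m) =
      (Fintype.card n : ℤ) + ∑ l, A l i + ∑ l, A l j + ∑ l, A l m + ∑ l, A l i * A l j +
        ∑ l, A l i * A l m + ∑ l, A l j * A l m + ∑ l, A l i * A l j * A l m := by
    rw [Finset.sum_congr rfl fun l _ => show (1 + A l i) * (1 + A l j) * (1 + A l m) =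
      1 + A l i + A l j + A l m + A l i * A l j + A l i * A l m + A l j * A l m +
        A l i * A l j * A l m by ring]
    simp only [Finset.sum_add_distrib, Finset.sum_const, Finset.card_univ, nsmul_eq_mul, mul_one]
  rw [hexpand, hA.sum_eq_zero_of_apply_eq_one hz hi, hA.sum_eq_zero_of_apply_eq_one hz hj,
    hA.sum_eq_zero_of_apply_eq_one hz hm, hA.sum_mul_eq_zero hji.symm,
    hA.sum_mul_eq_zero hmi.symm, hA.sum_mul_eq_zero hjm] at hprod
  have h4' : (4 : ℤ) ∣ Fintype.card n := by exact_mod_cast h4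
  simpa using (dvd_add_right h4').mp (by simpa [add_assoc] using hprod)

end IsHadamard

end Matrix

open Matrix

theorem hadamardNhat_transpose {n : ℕ} (s : Matrix (Fin n) (Fin n) ℤ) (z i : Fin n) :
    (hadamardNhat s z i)ᵀ = hadamardNhat s z i := by
  ext j m
  simp only [transpose_apply, hadamardNhat]
  exact congrArg (· / 4) (Finset.sum_congr rfl fun l _ => by ring)

theorem four_smul_hadamardNhat {n : ℕ} {s : Matrix (Fin n) (Fin n) ℤ} (hs : s.IsHadamard)
    (h4 : 4 ∣ n) {z : Fin n} (hz : ∀ l, s l z = 1) {i : Fin n} (hi : i ≠ z) :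
    (4 : ℤ) • hadamardNhat s z i =
      (colTripleSum s i).toBlock (fun x => x ≠ z ∧ x ≠ i) (fun x => x ≠ z ∧ x ≠ i) := by
  ext j m
  have h4 := hs.four_dvd_colTripleSum_apply (by simpa using h4) hz hi j.2.1 m.2.1 j.2.2 m.2.2
  rw [colTripleSum_apply] at h4
  rw [Matrix.smul_apply, toBlock_apply, colTripleSum_apply, smul_eq_mul, hadamardNhat,
    Int.mul_ediv_cancel' h4]

theorem hadamardNhat_mul_self {k : ℕ} {s : Matrix (Fin (4 * k)) (Fin (4 * k)) ℤ}
    (hs : s.IsHadamard) {z : Fin (4 * k)} (hz : ∀ l, s l z = 1) {i : Fin (4 * k)} (hi : i ≠ z) :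
    hadamardNhat s z i * hadamardNhat s z i = (k : ℤ) ^ 2 • 1 := by
  let p : Fin (4 * k) → Prop := fun x => x ≠ z ∧ x ≠ i
  have hT : (colTripleSum s i).toBlock p (fun x => ¬ p x) = 0 := by
    ext ⟨j, hjz, hji⟩ ⟨q, hq⟩
    obtain rfl | rfl : q = z ∨ q = i := by tauto
    · exact hs.colTripleSum_apply_eq_zero_of_apply_eq_one hz hji
    · exact hs.colTripleSum_apply_self_eq_zero hz q hjz
  refine smul_right_injective _ (show (16 : ℤ) ≠ 0 by norm_num) ?_
  calc (16 : ℤ) • (hadamardNhat s z i * hadamardNhat s z i)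
      = ((4 : ℤ) • hadamardNhat s z i) * ((4 : ℤ) • hadamardNhat s z i) := by
        rw [smul_mul_smul_comm]; norm_num
    _ = (colTripleSum s i * colTripleSum s i).toBlock p p := by
        rw [four_smul_hadamardNhat hs (dvd_mul_right 4 k) hz hi, toBlock_mul_eq_add p p p, hT,
          Matrix.zero_mul, add_zero]
    _ = (16 : ℤ) • ((k : ℤ) ^ 2 • 1) := by
        ext j m
        rw [hs.colTripleSum_mul_self, toBlock_apply, Matrix.smul_apply, Matrix.smul_apply,
          Matrix.smul_apply, one_apply, one_apply, Fintype.card_fin]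
        simp only [Subtype.ext_iff, smul_eq_mul]
        push_cast
        split_ifs <;> ring

theorem hadamard_Nhat_block_orthogonal_general
    (k : ℕ)
    (s : Matrix (Fin (4 * k)) (Fin (4 * k)) ℤ)
    (hpm : ∀ i j, s i j = 1 ∨ s i j = -1)
    (hH : s * s.transpose = (4 * (k : ℤ)) • 1)
    (z : Fin (4 * k))
    (h1 : ∀ i, s i z = 1)
    (i : Fin (4 * k)) (hi : i ≠ z) :
    (Matrix.fromBlocks
        (hadamardNhat s z i + 1) (hadamardNhat s z i - 1)
        (hadamardNhat s z i - 1) (-(hadamardNhat s z i) - 1)) *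
      (Matrix.fromBlocks
        (hadamardNhat s z i + 1) (hadamardNhat s z i - 1)
        (hadamardNhat s z i - 1) (-(hadamardNhat s z i) - 1)).transpose =
      (2 * (k : ℤ) ^ 2 + 2) • 1 := by
  have hcard : (4 * k : ℤ) ≠ 0 := by exact_mod_cast (Fin.pos i).ne'
  have hs : s.IsHadamard := by
    refine .of_mul_conjTranspose (fun l j => Unitary.mem_iff_eq_one_or_eq_neg_one.mpr (hpm l j))
      ?_ (IsRegular.of_ne_zero ?_)
    · simpa [conjTranspose_eq_transpose_of_trivial] using hH
    · simpa using hcard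
  exact fromBlocks_mul_transpose_eq_smul_one (hadamardNhat_mul_self hs h1 hi)
    (hadamardNhat_transpose s z i)

/-- Let `s` be a Hadamard matrix of order `4k` (`k > 1`)
whose column `z` (the first column) is all ones, and fix a column index
`i ≠ z`.  Then the `(8k−4)×(8k−4)` block matrix
`W_i = [[N̂_i + I, N̂_i − I], [N̂_i − I, −N̂_i − I]]` satisfies
`W_i ⬝ W_iᵀ = (2k² + 2) I`. -/
theorem hadamard_Nhat_block_orthogonal
    (k : ℕ) (hk : 1 < k)
    (s : Matrix (Fin (4 * k)) (Fin (4 * k)) ℤ)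
    (hpm : ∀ i j, s i j = 1 ∨ s i j = -1)
    (hH : s * s.transpose = (4 * (k : ℤ)) • 1)
    (z : Fin (4 * k)) (hz : (z : ℕ) = 0)
    (h1 : ∀ i, s i z = 1)
    (i : Fin (4 * k)) (hi : i ≠ z) :
    (Matrix.fromBlocks
        (hadamardNhat s z i + 1) (hadamardNhat s z i - 1)
        (hadamardNhat s z i - 1) (-(hadamardNhat s z i) - 1)) *
      (Matrix.fromBlocks
        (hadamardNhat s z i + 1) (hadamardNhat s z i - 1)
        (hadamardNhat s z i - 1) (-(hadamardNhat s z i) - 1)).transpose =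
      (2 * (k : ℤ) ^ 2 + 2) • 1 :=
  hadamard_Nhat_block_orthogonal_general k s hpm hH z h1 i hi
end
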